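/- arXiv:math/0510636 — 9 statements merged into one kernel-verified Lean document; each statement's English description precedes it below -/
import Mathlib

section
/- Let γ : ℝ → ℝ⁴ be a smooth curve with ‖γ(t)‖ = 1 and ‖γ′(t)‖ = 1 for all t ∈ ℝ, and suppose there is a constant k > 0 such that ‖γ″(t) + γ(t)‖ = k for all t and γ⁗(t) + 2γ″(t) + (1 − k²)γ(t) = 0 for all t. Then k ≤ 1, and exactly one of the following holds: (i) k = 1 and there exist pairwise orthogonal vectors c₁, c₂, c₄ ∈ ℝ⁴ with ‖c₁‖² = ‖c₂‖² = ‖c₄‖² = 1/2 such that γ(t) = cos(√2 t)·c₁ + sin(√2 t)·c₂ + c₄ for all t (γ is a circle of radius 1/√2); or (ii) 0 < k < 1 and there exist real numbers a > b > 0 with a² + b² = 2 and a²b² = 1 − k² (in particular a² ≠ b²), and pairwise orthogonal vectors c₁, c₂, c₃, c₄ ∈ ℝ⁴ with ‖c₁‖² = ‖c₂‖² = ‖c₃‖² = ‖c₄‖² = 1/2, such that γ(t) = cos(at)·c₁ + sin(at)·c₂ + cos(bt)·c₃ + sin(bt)·c₄ for all t (γ is a geodesic of the Clifford torus S¹(1/√2)×S¹(1/√2)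 ⊂ S³ with slope different from ±1). -/
set_option maxHeartbeats 1000000
open Real
open scoped RealInnerProductSpace ContDiff

section helpers
variable {E : Type*} [NormedAddCommGroup E] [InnerProductSpace ℝ E]

lemma bih_iter_smooth {f : ℝ → E} (hf : ContDiff ℝ ∞ f) (n : ℕ) :
    ContDiff ℝ ∞ (iteratedDeriv n f) := by
  rw [iteratedDeriv_eq_iterate]; exact hf.iterate_deriv n

lemma bih_inner_deriv_const {f g : ℝ → E} (hf : Differentiable ℝ f)
    (hg : Differentiable ℝ g) {c : ℝ} (h : ∀ t, ⟪f t, g t⟫ = c) :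
    ∀ t, ⟪f t, deriv g t⟫ + ⟪deriv f t, g t⟫ = 0 := by
  intro t
  have h0 : deriv (fun t => ⟪f t, g t⟫) t = 0 := by
    have : (fun t => ⟪f t, g t⟫) = fun _ => c := funext h
    rw [this, deriv_const]
  rwa [deriv_inner_apply (𝕜 := ℝ) (hf t) (hg t)] at h0
lemma bih_osc_zero {h : ℝ → E} (hd : ContDiff ℝ ∞ h) {Ω : ℝ} (hΩ : Ω ≠ 0)
    (heq : ∀ t, deriv (deriv h) t = (-(Ω ^ 2)) • h t)
    (h0 : h 0 = 0) (h0' : deriv h 0 = 0) : ∀ t, h t = 0 := by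
  have hdiff : Differentiable ℝ h := hd.differentiable (by simp)
  have hd1 : ContDiff ℝ ∞ (deriv h) := (contDiff_infty_iff_deriv.mp hd).2
  have hdiff1 : Differentiable ℝ (deriv h) := hd1.differentiable (by simp)
  set F := fun t => ⟪deriv h t, deriv h t⟫ + Ω ^ 2 * ⟪h t, h t⟫ with hFdef
  have hF : ∀ t, HasDerivAt F 0 t := by
    intro t
    have H1 : HasDerivAt h (deriv h t) t := (hdiff t).hasDerivAt
    have H2 : HasDerivAt (deriv h) (deriv (deriv h) t) t := (hdiff1 t).hasDerivAt
    have H := (H2.inner ℝ H2).add ((H1.inner ℝ H1).const_mul (Ω ^ 2))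
    refine H.congr_deriv ?_
    rw [heq t]
    simp [inner_smul_left, inner_smul_right, real_inner_comm (h t) (deriv h t)]
    ring
  have hFd : Differentiable ℝ F := fun t => (hF t).differentiableAt
  have hconst := is_const_of_deriv_eq_zero hFd (fun t => (hF t).deriv)
  intro t
  have hF0 : F t = 0 := by
    have := hconst t 0
    simpa [hFdef, h0, h0'] using this
  have hΩ2 : 0 < Ω ^ 2 := by positivity
  have i1 : (0:ℝ) ≤ ⟪h t, h t⟫ := real_inner_self_nonneg
  have i2 : (0:ℝ) ≤ ⟪deriv h t, deriv h t⟫ := real_inner_self_nonneg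
  have h2 : Ω ^ 2 * ⟪h t, h t⟫ = 0 :=
    le_antisymm (by simp only [hFdef] at hF0; linarith) (mul_nonneg hΩ2.le i1)
  have h1 : ⟪h t, h t⟫ = 0 := (mul_eq_zero.mp h2).resolve_left (by positivity)
  exact inner_self_eq_zero.mp h1

lemma bih_osc_sol {f : ℝ → E} (hf : ContDiff ℝ ∞ f) {Ω : ℝ} (hΩ : 0 < Ω)
    (heq : ∀ t, deriv (deriv f) t = (-(Ω ^ 2)) • f t) :
    ∀ t, f t = Real.cos (Ω * t) • f 0 + (Real.sin (Ω * t) / Ω) • deriv f 0 := by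
  have hdiff : Differentiable ℝ f := hf.differentiable (by simp)
  have hd1 : ContDiff ℝ ∞ (deriv f) := (contDiff_infty_iff_deriv.mp hf).2
  have hdiff1 : Differentiable ℝ (deriv f) := hd1.differentiable (by simp)
  set w : E := (1 / Ω) • deriv f 0 with hw
  have hlin : ∀ t : ℝ, HasDerivAt (fun t : ℝ => Ω * t) Ω t := by
    intro t; simpa using (hasDerivAt_id t).const_mul Ω
  have hcos : ∀ (t : ℝ) (v : E),
      HasDerivAt (fun t => Real.cos (Ω * t) • v) ((-(Ω * Real.sin (Ω * t))) • v) t := by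
    intro t v
    have := ((Real.hasDerivAt_cos (Ω * t)).comp t (hlin t)).smul_const v
    convert this using 1
    congr 1; ring
  have hsin : ∀ (t : ℝ) (v : E),
      HasDerivAt (fun t => Real.sin (Ω * t) • v) ((Ω * Real.cos (Ω * t)) • v) t := by
    intro t v
    have := ((Real.hasDerivAt_sin (Ω * t)).comp t (hlin t)).smul_const v
    convert this using 1
    congr 1; ring
  set g : ℝ → E := fun t => f t - Real.cos (Ω * t) • f 0 - Real.sin (Ω * t) • w with hg
  have hgsmooth : ContDiff ℝ ∞ g := by
    apply ContDiff.sub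
    apply ContDiff.sub hf
    · exact (Real.contDiff_cos.comp (contDiff_const.mul contDiff_id)).smul contDiff_const
    · exact (Real.contDiff_sin.comp (contDiff_const.mul contDiff_id)).smul contDiff_const
  have hg1 : ∀ t, HasDerivAt g
      (deriv f t + (Ω * Real.sin (Ω * t)) • f 0 - (Ω * Real.cos (Ω * t)) • w) t := by
    intro t
    have := ((hdiff t).hasDerivAt.sub (hcos t (f 0))).sub (hsin t w)
    convert this using 1
    · rfl
    · rw [neg_smul, sub_neg_eq_add]
  have hg1' : deriv g = fun t =>
      deriv f t + (Ω * Real.sin (Ω * t)) • f 0 - (Ω * Real.cos (Ω * t)) • w :=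
    funext fun t => (hg1 t).deriv
  have hg2 : ∀ t, deriv (deriv g) t = (-(Ω ^ 2)) • g t := by
    intro t
    have hc : ∀ (v : E), HasDerivAt (fun t => (Ω * Real.sin (Ω * t)) • v)
        ((Ω * (Ω * Real.cos (Ω * t))) • v) t := by
      intro v
      have := ((hsin t v).const_smul Ω)
      convert this using 1
      · funext s; rw [Pi.smul_apply, smul_smul]
      · rw [smul_smul]
    have hs : ∀ (v : E), HasDerivAt (fun t => (Ω * Real.cos (Ω * t)) • v)
        ((Ω * (-(Ω * Real.sin (Ω * t)))) • v) t := by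
      intro v
      have := ((hcos t v).const_smul Ω)
      convert this using 1
      · funext s; rw [Pi.smul_apply, smul_smul]
      · rw [smul_smul]
    have H : HasDerivAt (deriv g)
        (deriv (deriv f) t + (Ω * (Ω * Real.cos (Ω * t))) • f 0
          - (Ω * (-(Ω * Real.sin (Ω * t)))) • w) t := by
      rw [hg1']
      exact ((hdiff1 t).hasDerivAt.add (hc (f 0))).sub (hs w)
    rw [H.deriv, heq t, hg]
    simp only [smul_sub, smul_smul]
    module
  have hz := bih_osc_zero hgsmooth (ne_of_gt hΩ) hg2 ?_ ?_
  · intro t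
    have h' : f t - Real.cos (Ω * t) • f 0 - Real.sin (Ω * t) • w = 0 := hz t
    have hft : f t = Real.cos (Ω * t) • f 0 + Real.sin (Ω * t) • w := by
      linear_combination (norm := module) h'
    rw [hft, hw, smul_smul]
    congr 2
    ring
  · show f 0 - Real.cos (Ω * 0) • f 0 - Real.sin (Ω * 0) • w = 0
    simp
  · rw [hg1']
    simp only [mul_zero, Real.sin_zero, Real.cos_zero, zero_smul, add_zero, mul_one, hw,
      smul_smul, mul_one_div, div_self (ne_of_gt hΩ), one_smul, sub_self]

end helpers

/-- Classification of proper biharmonic curves of `S³` (Caddeo–Montaldo–Oniciuc),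
expressed through the ambient fourth-order equation in `ℝ⁴`. -/
theorem biharmonic_curves_in_S3
    (γ : ℝ → EuclideanSpace ℝ (Fin 4)) (hγ : ContDiff ℝ (⊤ : ℕ∞) γ)
    (hsph : ∀ t, ‖γ t‖ = 1) (harc : ∀ t, ‖deriv γ t‖ = 1)
    (k : ℝ) (hk : 0 < k)
    (hcurv : ∀ t, ‖iteratedDeriv 2 γ t + γ t‖ = k)
    (hbih : ∀ t, iteratedDeriv 4 γ t + (2 : ℝ) • iteratedDeriv 2 γ t
        + (1 - k ^ 2) • γ t = 0) :
    k ≤ 1 ∧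
      ((k = 1 ∧ ∃ c₁ c₂ c₄ : EuclideanSpace ℝ (Fin 4),
          ⟪c₁, c₂⟫ = 0 ∧ ⟪c₁, c₄⟫ = 0 ∧ ⟪c₂, c₄⟫ = 0 ∧
          ‖c₁‖ ^ 2 = 1 / 2 ∧ ‖c₂‖ ^ 2 = 1 / 2 ∧ ‖c₄‖ ^ 2 = 1 / 2 ∧
          ∀ t, γ t = Real.cos (Real.sqrt 2 * t) • c₁
              + Real.sin (Real.sqrt 2 * t) • c₂ + c₄) ∨
        (0 < k ∧ k < 1 ∧ ∃ a b : ℝ, b < a ∧ 0 < b ∧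
          a ^ 2 + b ^ 2 = 2 ∧ a ^ 2 * b ^ 2 = 1 - k ^ 2 ∧
          ∃ c₁ c₂ c₃ c₄ : EuclideanSpace ℝ (Fin 4),
            ⟪c₁, c₂⟫ = 0 ∧ ⟪c₁, c₃⟫ = 0 ∧ ⟪c₁, c₄⟫ = 0 ∧
            ⟪c₂, c₃⟫ = 0 ∧ ⟪c₂, c₄⟫ = 0 ∧ ⟪c₃, c₄⟫ = 0 ∧
            ‖c₁‖ ^ 2 = 1 / 2 ∧ ‖c₂‖ ^ 2 = 1 / 2 ∧
            ‖c₃‖ ^ 2 = 1 / 2 ∧ ‖c₄‖ ^ 2 = 1 / 2 ∧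
            ∀ t, γ t = Real.cos (a * t) • c₁ + Real.sin (a * t) • c₂
                + Real.cos (b * t) • c₃ + Real.sin (b * t) • c₄)) := by
  have hsmooth : ContDiff ℝ ∞ γ := hγ.of_le (by simp)
  have hsm : ∀ n, ContDiff ℝ ∞ (iteratedDeriv n γ) := bih_iter_smooth hsmooth
  have hdn : ∀ n, Differentiable ℝ (iteratedDeriv n γ) :=
    fun n => (hsm n).differentiable (by simp)
  have key : ∀ (i j : ℕ) (c : ℝ),
      (∀ t, ⟪iteratedDeriv i γ t, iteratedDeriv j γ t⟫ = c) →
      ∀ t, ⟪iteratedDeriv i γ t, iteratedDeriv (j+1) γ t⟫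
        + ⟪iteratedDeriv (i+1) γ t, iteratedDeriv j γ t⟫ = 0 := by
    intro i j c h t
    have := bih_inner_deriv_const (hdn i) (hdn j) h t
    rwa [iteratedDeriv_succ (n := i), iteratedDeriv_succ (n := j)]
  have hid0 : iteratedDeriv 0 γ = γ := iteratedDeriv_zero
  have hid1 : iteratedDeriv 1 γ = deriv γ := iteratedDeriv_one
  -- base identities
  have comm : ∀ (i j : ℕ) (t : ℝ),
      ⟪iteratedDeriv i γ t, iteratedDeriv j γ t⟫
        = ⟪iteratedDeriv j γ t, iteratedDeriv i γ t⟫ := fun _ _ _ => real_inner_comm _ _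
  have hA : ∀ t, ⟪iteratedDeriv 0 γ t, iteratedDeriv 0 γ t⟫ = 1 := by
    intro t
    rw [iteratedDeriv_zero, real_inner_self_eq_norm_sq, hsph t]; norm_num
  have hC : ∀ t, ⟪iteratedDeriv 1 γ t, iteratedDeriv 1 γ t⟫ = 1 := by
    intro t
    rw [iteratedDeriv_one, real_inner_self_eq_norm_sq, harc t]; norm_num
  have hB : ∀ t, ⟪iteratedDeriv 0 γ t, iteratedDeriv 1 γ t⟫ = 0 := by
    intro t
    have h1 := key 0 0 1 hA t
    simp only [Nat.reduceAdd] at h1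
    have h2 := comm 1 0 t
    linarith
  have hD : ∀ t, ⟪iteratedDeriv 0 γ t, iteratedDeriv 2 γ t⟫ = -1 := by
    intro t
    have h1 := key 0 1 0 hB t
    simp only [Nat.reduceAdd] at h1
    have h2 := comm 1 1 t
    have h3 := hC t
    linarith
  have hE : ∀ t, ⟪iteratedDeriv 1 γ t, iteratedDeriv 2 γ t⟫ = 0 := by
    intro t
    have h1 := key 1 1 1 hC t
    simp only [Nat.reduceAdd] at h1
    have h2 := comm 2 1 t
    linarith
  have hF : ∀ t, ⟪iteratedDeriv 0 γ t, iteratedDeriv 3 γ t⟫ = 0 := by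
    intro t
    have h1 := key 0 2 (-1) hD t
    simp only [Nat.reduceAdd] at h1
    have h2 := comm 1 2 t
    have h3 := hE t
    linarith
  have hG : ∀ t, ⟪iteratedDeriv 2 γ t, iteratedDeriv 2 γ t⟫ = 1 + k ^ 2 := by
    intro t
    have h1 : ⟪iteratedDeriv 2 γ t + γ t, iteratedDeriv 2 γ t + γ t⟫ = k ^ 2 := by
      rw [real_inner_self_eq_norm_sq, hcurv t]
    rw [real_inner_add_add_self] at h1
    have hD' := hD t
    rw [iteratedDeriv_zero] at hD'
    have hA' := hA t
    rw [iteratedDeriv_zero] at hA'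
    have h2 : ⟪iteratedDeriv 2 γ t, γ t⟫ = ⟪γ t, iteratedDeriv 2 γ t⟫ := real_inner_comm _ _
    linarith
  have hH : ∀ t, ⟪iteratedDeriv 2 γ t, iteratedDeriv 3 γ t⟫ = 0 := by
    intro t
    have h1 := key 2 2 (1 + k ^ 2) hG t
    simp only [Nat.reduceAdd] at h1
    have h2 := comm 3 2 t
    linarith
  have hI : ∀ t, ⟪iteratedDeriv 1 γ t, iteratedDeriv 3 γ t⟫ = -(1 + k ^ 2) := by
    intro t
    have h1 := key 1 2 0 hE t
    simp only [Nat.reduceAdd] at h1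
    have h2 := comm 2 2 t
    have h3 := hG t
    linarith
  have hbih' : ∀ t, iteratedDeriv 4 γ t
      = (-2 : ℝ) • iteratedDeriv 2 γ t + (-(1 - k ^ 2)) • γ t := by
    intro t
    have := hbih t
    linear_combination (norm := module) this
  have hJ : ∀ t, ⟪iteratedDeriv 3 γ t, iteratedDeriv 3 γ t⟫ = 1 + 3 * k ^ 2 := by
    intro t
    have h24 : ⟪iteratedDeriv 2 γ t, iteratedDeriv 4 γ t⟫ = -(1 + 3 * k ^ 2) := by
      rw [hbih' t, inner_add_right, real_inner_smul_right, real_inner_smul_right]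
      have hD' := hD t
      rw [iteratedDeriv_zero] at hD'
      have h2 : ⟪iteratedDeriv 2 γ t, γ t⟫ = ⟪γ t, iteratedDeriv 2 γ t⟫ := real_inner_comm _ _
      have h3 := hG t
      rw [h2, hD', h3]
      ring
    have h1 := key 2 3 0 hH t
    simp only [Nat.reduceAdd] at h1
    have h2 := comm 3 3 t
    linarith
  -- k ≤ 1 via Cauchy-Schwarz on the first and third derivatives
  have hkle : k ≤ 1 := by
    have cs := real_inner_mul_inner_self_le (iteratedDeriv 1 γ 0) (iteratedDeriv 3 γ 0)
    rw [hI 0, hC 0, hJ 0] at cs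
    by_contra hcon
    push_neg at hcon
    have h1 : 1 < k ^ 2 := by nlinarith
    have h2 : k ^ 2 * 1 < k ^ 2 * k ^ 2 := by nlinarith [mul_pos hk hk]
    nlinarith
  -- derivative step lemmas with explicit numerals
  have hs0 : deriv γ = iteratedDeriv 1 γ := hid1.symm
  have hs1 : deriv (iteratedDeriv 1 γ) = iteratedDeriv 2 γ := (iteratedDeriv_succ).symm
  have hs2 : deriv (iteratedDeriv 2 γ) = iteratedDeriv 3 γ := (iteratedDeriv_succ).symm
  have hs3 : deriv (iteratedDeriv 3 γ) = iteratedDeriv 4 γ := (iteratedDeriv_succ).symm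
  have hdγ : Differentiable ℝ γ := hsmooth.differentiable (by simp)
  have hhd : ∀ (n : ℕ) t, HasDerivAt (iteratedDeriv n γ) (iteratedDeriv (n+1) γ t) t := by
    intro n t
    have := (hdn n t).hasDerivAt
    rwa [iteratedDeriv_succ]
  have hhd0 : ∀ t, HasDerivAt γ (iteratedDeriv 1 γ t) t := by
    intro t
    have := (hdγ t).hasDerivAt
    rwa [hs0] at this
  have hhd1 : ∀ t, HasDerivAt (iteratedDeriv 1 γ) (iteratedDeriv 2 γ t) t := by
    intro t; have := (hdn 1 t).hasDerivAt; rwa [hs1] at this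
  have hhd2 : ∀ t, HasDerivAt (iteratedDeriv 2 γ) (iteratedDeriv 3 γ t) t := by
    intro t; have := (hdn 2 t).hasDerivAt; rwa [hs2] at this
  have hhd3 : ∀ t, HasDerivAt (iteratedDeriv 3 γ) (iteratedDeriv 4 γ t) t := by
    intro t; have := (hdn 3 t).hasDerivAt; rwa [hs3] at this
  -- Gram data at 0
  have hPP : ⟪γ 0, γ 0⟫ = 1 := by have := hA 0; rwa [iteratedDeriv_zero] at this
  have hPQ : ⟪γ 0, iteratedDeriv 1 γ 0⟫ = 0 := by
    have := hB 0; rwa [iteratedDeriv_zero] at this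
  have hQP : ⟪iteratedDeriv 1 γ 0, γ 0⟫ = 0 := by rw [real_inner_comm]; exact hPQ
  have hPR : ⟪γ 0, iteratedDeriv 2 γ 0⟫ = -1 := by
    have := hD 0; rwa [iteratedDeriv_zero] at this
  have hRP : ⟪iteratedDeriv 2 γ 0, γ 0⟫ = -1 := by rw [real_inner_comm]; exact hPR
  have hPS : ⟪γ 0, iteratedDeriv 3 γ 0⟫ = 0 := by
    have := hF 0; rwa [iteratedDeriv_zero] at this
  have hSP : ⟪iteratedDeriv 3 γ 0, γ 0⟫ = 0 := by rw [real_inner_comm]; exact hPS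
  have hQQ : ⟪iteratedDeriv 1 γ 0, iteratedDeriv 1 γ 0⟫ = 1 := hC 0
  have hQR : ⟪iteratedDeriv 1 γ 0, iteratedDeriv 2 γ 0⟫ = 0 := hE 0
  have hRQ : ⟪iteratedDeriv 2 γ 0, iteratedDeriv 1 γ 0⟫ = 0 := by rw [real_inner_comm]; exact hQR
  have hQS : ⟪iteratedDeriv 1 γ 0, iteratedDeriv 3 γ 0⟫ = -(1 + k ^ 2) := hI 0
  have hSQ : ⟪iteratedDeriv 3 γ 0, iteratedDeriv 1 γ 0⟫ = -(1 + k ^ 2) := by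
    rw [real_inner_comm]; exact hQS
  have hRR : ⟪iteratedDeriv 2 γ 0, iteratedDeriv 2 γ 0⟫ = 1 + k ^ 2 := hG 0
  have hRS : ⟪iteratedDeriv 2 γ 0, iteratedDeriv 3 γ 0⟫ = 0 := hH 0
  have hSR : ⟪iteratedDeriv 3 γ 0, iteratedDeriv 2 γ 0⟫ = 0 := by rw [real_inner_comm]; exact hRS
  have hSS : ⟪iteratedDeriv 3 γ 0, iteratedDeriv 3 γ 0⟫ = 1 + 3 * k ^ 2 := hJ 0
  refine ⟨hkle, ?_⟩
  rcases eq_or_lt_of_le hkle with hk1 | hklt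
  · -- k = 1 case
    left
    subst hk1
    refine ⟨rfl, ?_⟩
    have hsq2 : (Real.sqrt 2) ^ 2 = 2 := Real.sq_sqrt (by norm_num)
    have hsqpos : 0 < Real.sqrt 2 := Real.sqrt_pos.mpr (by norm_num)
    -- γ'' satisfies the harmonic oscillator equation with frequency √2
    have hosc : ∀ t, deriv (deriv (iteratedDeriv 2 γ)) t
        = (-((Real.sqrt 2) ^ 2)) • iteratedDeriv 2 γ t := by
      intro t
      rw [hs2, hs3, hbih' t, hsq2]
      norm_num
    have hsol := bih_osc_sol (hsm 2) hsqpos hosc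
    simp only [hs2] at hsol
    -- the auxiliary affine curve ψ
    set ψ : ℝ → EuclideanSpace ℝ (Fin 4) :=
      fun t => γ t + (2⁻¹ : ℝ) • iteratedDeriv 2 γ t with hψdef
    have hψd : ∀ t, HasDerivAt ψ
        (iteratedDeriv 1 γ t + (2⁻¹ : ℝ) • iteratedDeriv 3 γ t) t := by
      intro t
      exact (hhd0 t).add ((hhd2 t).const_smul (2⁻¹ : ℝ))
    have hψ1 : deriv ψ = fun t =>
        iteratedDeriv 1 γ t + (2⁻¹ : ℝ) • iteratedDeriv 3 γ t :=
      funext fun t => (hψd t).deriv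
    have hψ2 : ∀ t, deriv (deriv ψ) t = 0 := by
      intro t
      rw [hψ1]
      have h3 : HasDerivAt (fun t => iteratedDeriv 1 γ t + (2⁻¹ : ℝ) • iteratedDeriv 3 γ t) _ t :=
        (hhd1 t).add ((hhd3 t).const_smul (2⁻¹ : ℝ))
      rw [h3.deriv, hbih' t]
      module
    have hψdiff : Differentiable ℝ (deriv ψ) := by
      rw [hψ1]; exact fun t => (hdn 1 t).add ((hdn 3 t).const_smul (2⁻¹ : ℝ))
    have hvconst := is_const_of_deriv_eq_zero hψdiff hψ2
    set v : EuclideanSpace ℝ (Fin 4) := deriv ψ 0 with hvdef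
    have hψlin : ∀ t, ψ t = ψ 0 + t • v := by
      intro t
      have hφ : ∀ s : ℝ, HasDerivAt (fun s => ψ s - s • v) 0 s := by
        intro s
        have h2 : HasDerivAt (fun s : ℝ => s • v) v s := by
          simpa using (hasDerivAt_id s).smul_const v
        have h3 := (hψd s).sub h2
        have hvs : deriv ψ s = iteratedDeriv 1 γ s + (2⁻¹ : ℝ) • iteratedDeriv 3 γ s :=
          congrFun hψ1 s
        have hval : iteratedDeriv 1 γ s + (2⁻¹ : ℝ) • iteratedDeriv 3 γ s = v := by
          rw [← hvs, hvdef]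
          exact hvconst s 0
        rw [hval, sub_self] at h3
        exact h3
      have hconst2 := is_const_of_deriv_eq_zero
        (fun s => (hφ s).differentiableAt) (fun s => (hφ s).deriv)
      have h4 := hconst2 t 0
      simp only [zero_smul, sub_zero] at h4
      linear_combination (norm := module) h4
    have hvzero : v = 0 := by
      by_contra hv
      have hb : ∀ t, ‖ψ t‖ ≤ 3 := by
        intro t
        have h2 : ‖iteratedDeriv 2 γ t‖ ^ 2 = 2 := by
          have := hG t
          rw [real_inner_self_eq_norm_sq] at this
          rw [this]; norm_num
        have h2' : ‖iteratedDeriv 2 γ t‖ ≤ 2 := by nlinarith [norm_nonneg (iteratedDeriv 2 γ t)]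
        calc ‖ψ t‖ ≤ ‖γ t‖ + ‖(2⁻¹ : ℝ) • iteratedDeriv 2 γ t‖ := norm_add_le _ _
          _ ≤ 1 + 2⁻¹ * 2 := by
              rw [hsph t, norm_smul]
              have h9 : ‖(2⁻¹ : ℝ)‖ = 2⁻¹ := by
                rw [Real.norm_eq_abs]; norm_num
              rw [h9]
              nlinarith
          _ ≤ 3 := by norm_num
      have hvpos : 0 < ‖v‖ := norm_pos_iff.mpr hv
      set T : ℝ := (4 + ‖ψ 0‖) / ‖v‖ with hT
      have h5 := hb T
      rw [hψlin T] at h5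
      have h6 : ‖T • v‖ ≤ ‖ψ 0 + T • v‖ + ‖ψ 0‖ := by
        have := norm_sub_le (ψ 0 + T • v) (ψ 0)
        simpa using this
      have h7 : ‖T • v‖ = T * ‖v‖ := by
        rw [norm_smul]
        congr 1
        have hTpos : 0 ≤ T := by positivity
        exact abs_of_nonneg hTpos
      have h8 : T * ‖v‖ = 4 + ‖ψ 0‖ := by
        rw [hT]; field_simp
      nlinarith [norm_nonneg (ψ 0)]
    refine ⟨(-(2⁻¹ : ℝ)) • iteratedDeriv 2 γ 0,
      (-(1 / (2 * Real.sqrt 2))) • iteratedDeriv 3 γ 0, ψ 0, ?_, ?_, ?_, ?_, ?_, ?_, ?_⟩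
    · rw [real_inner_smul_left, real_inner_smul_right, hRS]; ring
    · rw [hψdef]
      simp only [real_inner_smul_left, inner_add_right, real_inner_smul_right, hRP, hRR]
      norm_num
    · rw [hψdef]
      simp only [real_inner_smul_left, inner_add_right, real_inner_smul_right, hSP, hSR]
      norm_num
    · rw [← real_inner_self_eq_norm_sq, real_inner_smul_left, real_inner_smul_right, hRR]
      norm_num
    · rw [← real_inner_self_eq_norm_sq, real_inner_smul_left, real_inner_smul_right, hSS]
      have hne : Real.sqrt 2 ≠ 0 := ne_of_gt hsqpos
      field_simp
      linarith [hsq2]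
    · rw [hψdef, ← real_inner_self_eq_norm_sq]
      simp only [inner_add_left, inner_add_right, real_inner_smul_left, real_inner_smul_right,
        hPP, hPR, hRP, hRR]
      norm_num
    · intro t
      have h1 : ψ t = ψ 0 := by rw [hψlin t, hvzero]; simp
      have h2 : γ t = ψ 0 - (2⁻¹ : ℝ) • iteratedDeriv 2 γ t := by
        rw [← h1, hψdef]; module
      rw [h2, hsol t]
      module
  · -- k < 1 case
    right
    have h1k : (0:ℝ) < 1 + k := by linarith
    have h2k : (0:ℝ) < 1 - k := by linarith
    set a := Real.sqrt (1 + k) with hadef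
    set b := Real.sqrt (1 - k) with hbdef
    have ha2 : a ^ 2 = 1 + k := Real.sq_sqrt h1k.le
    have hb2 : b ^ 2 = 1 - k := Real.sq_sqrt h2k.le
    have hapos : 0 < a := Real.sqrt_pos.mpr h1k
    have hbpos : 0 < b := Real.sqrt_pos.mpr h2k
    have hba : b < a := by
      rw [hadef, hbdef]
      exact Real.sqrt_lt_sqrt h2k.le (by linarith)
    have hane : a ≠ 0 := ne_of_gt hapos
    have hbne : b ≠ 0 := ne_of_gt hbpos
    have hkne : k ≠ 0 := ne_of_gt hk
    -- the two component curves
    set V : ℝ → EuclideanSpace ℝ (Fin 4) :=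
      fun t => (-(1/(2*k))) • (iteratedDeriv 2 γ t + (1-k) • γ t) with hVdef
    set U : ℝ → EuclideanSpace ℝ (Fin 4) :=
      fun t => (1/(2*k)) • (iteratedDeriv 2 γ t + (1+k) • γ t) with hUdef
    have hUV : ∀ t, V t + U t = γ t := by
      intro t
      rw [hVdef, hUdef]
      match_scalars <;> (field_simp; try ring)
    have hVs : ContDiff ℝ ∞ V :=
      ((hsm 2).add (hsmooth.const_smul (1-k))).const_smul (-(1/(2*k)))
    have hUs : ContDiff ℝ ∞ U :=
      ((hsm 2).add (hsmooth.const_smul (1+k))).const_smul (1/(2*k))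
    have hVd : ∀ t, HasDerivAt V
        ((-(1/(2*k))) • (iteratedDeriv 3 γ t + (1-k) • iteratedDeriv 1 γ t)) t := by
      intro t
      exact ((hhd2 t).add ((hhd0 t).const_smul (1-k))).const_smul (-(1/(2*k)))
    have hUd : ∀ t, HasDerivAt U
        ((1/(2*k)) • (iteratedDeriv 3 γ t + (1+k) • iteratedDeriv 1 γ t)) t := by
      intro t
      exact ((hhd2 t).add ((hhd0 t).const_smul (1+k))).const_smul (1/(2*k))
    have hVd1 : deriv V = fun t =>
        (-(1/(2*k))) • (iteratedDeriv 3 γ t + (1-k) • iteratedDeriv 1 γ t) :=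
      funext fun t => (hVd t).deriv
    have hUd1 : deriv U = fun t =>
        (1/(2*k)) • (iteratedDeriv 3 γ t + (1+k) • iteratedDeriv 1 γ t) :=
      funext fun t => (hUd t).deriv
    have hVd2 : ∀ t, deriv (deriv V) t = (-(a ^ 2)) • V t := by
      intro t
      rw [hVd1]
      have h3 : HasDerivAt (fun t => (-(1/(2*k))) • (iteratedDeriv 3 γ t + (1-k) • iteratedDeriv 1 γ t)) _ t :=
        ((hhd3 t).add ((hhd1 t).const_smul (1-k))).const_smul (-(1/(2*k)))
      rw [h3.deriv, hbih' t, hVdef, ha2]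
      module
    have hUd2 : ∀ t, deriv (deriv U) t = (-(b ^ 2)) • U t := by
      intro t
      rw [hUd1]
      have h3 : HasDerivAt (fun t => (1/(2*k)) • (iteratedDeriv 3 γ t + (1+k) • iteratedDeriv 1 γ t)) _ t :=
        ((hhd3 t).add ((hhd1 t).const_smul (1+k))).const_smul (1/(2*k))
      rw [h3.deriv, hbih' t, hUdef, hb2]
      module
    have hVsol := bih_osc_sol hVs hapos hVd2
    have hUsol := bih_osc_sol hUs hbpos hUd2
    refine ⟨hk, hklt, a, b, hba, hbpos, by rw [ha2, hb2]; ring, by rw [ha2, hb2]; ring,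
      (-(1/(2*k))) • (iteratedDeriv 2 γ 0 + (1-k) • γ 0),
      (1/a) • ((-(1/(2*k))) • (iteratedDeriv 3 γ 0 + (1-k) • iteratedDeriv 1 γ 0)),
      (1/(2*k)) • (iteratedDeriv 2 γ 0 + (1+k) • γ 0),
      (1/b) • ((1/(2*k)) • (iteratedDeriv 3 γ 0 + (1+k) • iteratedDeriv 1 γ 0)),
      ?_, ?_, ?_, ?_, ?_, ?_, ?_, ?_, ?_, ?_, ?_⟩
    · -- ⟪c₁, c₂⟫ = 0
      simp only [inner_add_left, inner_add_right, real_inner_smul_left, real_inner_smul_right,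
        hPP, hPQ, hQP, hPR, hRP, hPS, hSP, hQQ, hQR, hRQ, hQS, hSQ, hRR, hRS, hSR, hSS]
      ring
    · -- ⟪c₁, c₃⟫ = 0
      simp only [inner_add_left, inner_add_right, real_inner_smul_left, real_inner_smul_right,
        hPP, hPQ, hQP, hPR, hRP, hPS, hSP, hQQ, hQR, hRQ, hQS, hSQ, hRR, hRS, hSR, hSS]
      ring
    · -- ⟪c₁, c₄⟫ = 0
      simp only [inner_add_left, inner_add_right, real_inner_smul_left, real_inner_smul_right,
        hPP, hPQ, hQP, hPR, hRP, hPS, hSP, hQQ, hQR, hRQ, hQS, hSQ, hRR, hRS, hSR, hSS]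
      ring
    · -- ⟪c₂, c₃⟫ = 0
      simp only [inner_add_left, inner_add_right, real_inner_smul_left, real_inner_smul_right,
        hPP, hPQ, hQP, hPR, hRP, hPS, hSP, hQQ, hQR, hRQ, hQS, hSQ, hRR, hRS, hSR, hSS]
      ring
    · -- ⟪c₂, c₄⟫ = 0
      simp only [inner_add_left, inner_add_right, real_inner_smul_left, real_inner_smul_right,
        hPP, hPQ, hQP, hPR, hRP, hPS, hSP, hQQ, hQR, hRQ, hQS, hSQ, hRR, hRS, hSR, hSS]
      ring
    · -- ⟪c₃, c₄⟫ = 0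
      simp only [inner_add_left, inner_add_right, real_inner_smul_left, real_inner_smul_right,
        hPP, hPQ, hQP, hPR, hRP, hPS, hSP, hQQ, hQR, hRQ, hQS, hSQ, hRR, hRS, hSR, hSS]
      ring
    · -- ‖c₁‖² = 1/2
      rw [← real_inner_self_eq_norm_sq]
      simp only [inner_add_left, inner_add_right, real_inner_smul_left, real_inner_smul_right,
        hPP, hPQ, hQP, hPR, hRP, hPS, hSP, hQQ, hQR, hRQ, hQS, hSQ, hRR, hRS, hSR, hSS]
      field_simp
      ring
    · -- ‖c₂‖² = 1/2
      rw [← real_inner_self_eq_norm_sq]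
      simp only [inner_add_left, inner_add_right, real_inner_smul_left, real_inner_smul_right,
        hPP, hPQ, hQP, hPR, hRP, hPS, hSP, hQQ, hQR, hRQ, hQS, hSQ, hRR, hRS, hSR, hSS]
      field_simp
      linear_combination (-2*k^2) * ha2
    · -- ‖c₃‖² = 1/2
      rw [← real_inner_self_eq_norm_sq]
      simp only [inner_add_left, inner_add_right, real_inner_smul_left, real_inner_smul_right,
        hPP, hPQ, hQP, hPR, hRP, hPS, hSP, hQQ, hQR, hRQ, hQS, hSQ, hRR, hRS, hSR, hSS]
      field_simp
      ring
    · -- ‖c₄‖² = 1/2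
      rw [← real_inner_self_eq_norm_sq]
      simp only [inner_add_left, inner_add_right, real_inner_smul_left, real_inner_smul_right,
        hPP, hPQ, hQP, hPR, hRP, hPS, hSP, hQQ, hQR, hRQ, hQS, hSQ, hRR, hRS, hSR, hSS]
      field_simp
      linear_combination (-2*k^2) * hb2
    · -- the explicit formula
      intro t
      have hV0 : V 0 = (-(1/(2*k))) • (iteratedDeriv 2 γ 0 + (1-k) • γ 0) := by rw [hVdef]
      have hU0 : U 0 = (1/(2*k)) • (iteratedDeriv 2 γ 0 + (1+k) • γ 0) := by rw [hUdef]
      have hdV0 : deriv V 0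
          = (-(1/(2*k))) • (iteratedDeriv 3 γ 0 + (1-k) • iteratedDeriv 1 γ 0) :=
        congrFun hVd1 0
      have hdU0 : deriv U 0
          = (1/(2*k)) • (iteratedDeriv 3 γ 0 + (1+k) • iteratedDeriv 1 γ 0) :=
        congrFun hUd1 0
      rw [← hUV t, hVsol t, hUsol t, hV0, hU0, hdV0, hdU0]
      module
end

section
/- Let n ≥ 2 and let c₁, c₂, c₄ ∈ ℝ^{n+1} be pairwise orthogonal vectors with ‖c₁‖² = ‖c₂‖² = ‖c₄‖² = 1/2. Define γ : ℝ → ℝ^{n+1} by γ(t) = cos(√2 t)·c₁ + sin(√2 t)·c₂ + c₄. Then ‖γ(t)‖ = 1 and ‖γ′(t)‖ = 1 for all t (γ is an arc-length parametrized curve on the unit sphere Sⁿ), its geodesic curvature is constant equal to 1, i.e. ‖γ″(t) + γ(t)‖ = 1 for all t, and γ satisfies the biharmonic equation γ⁗(t) + 2γ″(t) + (1 − 1²)γ(t) = 0 for all t; hence γ is a proper biharmonic curve of Sⁿ with first curvature k₁ = 1. -/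
open Real
open scoped RealInnerProductSpace

private lemma hcos' (s t : ℝ) :
    HasDerivAt (fun t => Real.cos (s * t)) (-(s * Real.sin (s * t))) t := by
  have := (Real.hasDerivAt_cos (s * t)).comp t ((hasDerivAt_id t).const_mul s)
  simpa [mul_comm, Function.comp_def] using this

private lemma hsin' (s t : ℝ) :
    HasDerivAt (fun t => Real.sin (s * t)) (s * Real.cos (s * t)) t := by
  have := (Real.hasDerivAt_sin (s * t)).comp t ((hasDerivAt_id t).const_mul s)
  simpa [mul_comm, Function.comp_def] using this

set_option maxHeartbeats 1000000 in
/-- The circles `γ(t) = cos(√2 t)·c₁ + sin(√2 t)·c₂ + c₄`, with `c₁, c₂, c₄`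
pairwise orthogonal of squared norm `1/2`, are proper biharmonic curves of `Sⁿ`
with first curvature `k₁ = 1`. -/
theorem circle_is_proper_biharmonic_in_sphere
    (n : ℕ) (hn : 2 ≤ n)
    (c₁ c₂ c₄ : EuclideanSpace ℝ (Fin (n + 1)))
    (h12 : ⟪c₁, c₂⟫ = 0) (h14 : ⟪c₁, c₄⟫ = 0) (h24 : ⟪c₂, c₄⟫ = 0)
    (hn1 : ‖c₁‖ ^ 2 = 1 / 2) (hn2 : ‖c₂‖ ^ 2 = 1 / 2) (hn4 : ‖c₄‖ ^ 2 = 1 / 2)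
    (γ : ℝ → EuclideanSpace ℝ (Fin (n + 1)))
    (hγ : ∀ t, γ t = Real.cos (Real.sqrt 2 * t) • c₁
        + Real.sin (Real.sqrt 2 * t) • c₂ + c₄) :
    (∀ t, ‖γ t‖ = 1) ∧ (∀ t, ‖deriv γ t‖ = 1) ∧
      (∀ t, ‖iteratedDeriv 2 γ t + γ t‖ = 1) ∧
      (∀ t, iteratedDeriv 4 γ t + (2 : ℝ) • iteratedDeriv 2 γ t
          + (1 - 1 ^ 2 : ℝ) • γ t = 0) := by
  set s : ℝ := Real.sqrt 2 with hs
  have hs2 : s * s = 2 := Real.mul_self_sqrt (by norm_num)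
  have hγ' : γ = fun t => Real.cos (s * t) • c₁ + Real.sin (s * t) • c₂ + c₄ :=
    funext hγ
  -- norm of a general combination
  have hcombo : ∀ a b d : ℝ,
      ‖a • c₁ + b • c₂ + d • c₄‖ ^ 2 = (a ^ 2 + b ^ 2 + d ^ 2) / 2 := by
    intro a b d
    have h21 : ⟪c₂, c₁⟫ = 0 := by rw [real_inner_comm]; exact h12
    have h41 : ⟪c₄, c₁⟫ = 0 := by rw [real_inner_comm]; exact h14
    have h42 : ⟪c₄, c₂⟫ = 0 := by rw [real_inner_comm]; exact h24
    rw [← real_inner_self_eq_norm_sq]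
    simp only [inner_add_left, inner_add_right, real_inner_smul_left,
      real_inner_smul_right, h12, h14, h24, h21, h41, h42,
      real_inner_self_eq_norm_sq, hn1, hn2, hn4]
    simp only [norm_smul, mul_pow, sq_abs, hn1, hn2, hn4, Real.norm_eq_abs]
    ring
  have normone : ∀ x : EuclideanSpace ℝ (Fin (n + 1)), ‖x‖ ^ 2 = 1 → ‖x‖ = 1 := by
    intro x hx
    have := norm_nonneg x
    nlinarith
  -- first derivative
  have hd1 : deriv γ = fun t =>
      (-(s * Real.sin (s * t))) • c₁ + (s * Real.cos (s * t)) • c₂ := by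
    funext t
    rw [hγ']
    exact ((((hcos' s t).smul_const c₁).add ((hsin' s t).smul_const c₂)).add_const c₄).deriv
  -- second derivative
  have hd2 : deriv (deriv γ) = fun t =>
      (-(2 * Real.cos (s * t))) • c₁ + (-(2 * Real.sin (s * t))) • c₂ := by
    funext t
    rw [hd1]
    have h := (((((hsin' s t).const_mul s).neg).smul_const c₁).add
      (((hcos' s t).const_mul s).smul_const c₂))
    refine h.deriv.trans ?_
    congr 1
    · congr 1
      linear_combination (-Real.cos (s * t)) * hs2
    · congr 1
      linear_combination (-Real.sin (s * t)) * hs2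
  -- third derivative
  have hd3 : deriv (deriv (deriv γ)) = fun t =>
      (2 * s * Real.sin (s * t)) • c₁ + (-(2 * s * Real.cos (s * t))) • c₂ := by
    funext t
    rw [hd2]
    have h := (((((hcos' s t).const_mul 2).neg).smul_const c₁).add
      ((((hsin' s t).const_mul 2).neg).smul_const c₂))
    refine h.deriv.trans ?_
    congr 1
    · congr 1; ring
    · congr 1; ring
  -- fourth derivative
  have hd4 : deriv (deriv (deriv (deriv γ))) = fun t =>
      (4 * Real.cos (s * t)) • c₁ + (4 * Real.sin (s * t)) • c₂ := by
    funext t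
    rw [hd3]
    have h := ((((hsin' s t).const_mul (2 * s)).smul_const c₁).add
      ((((hcos' s t).const_mul (2 * s)).neg).smul_const c₂))
    refine h.deriv.trans ?_
    congr 1
    · congr 1
      linear_combination (2 * Real.cos (s * t)) * hs2
    · congr 1
      linear_combination (2 * Real.sin (s * t)) * hs2
  have hit2 : iteratedDeriv 2 γ = deriv (deriv γ) := by
    simp [iteratedDeriv_succ, iteratedDeriv_zero]
  have hit4 : iteratedDeriv 4 γ = deriv (deriv (deriv (deriv γ))) := by
    simp [iteratedDeriv_succ, iteratedDeriv_zero]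
  have pyth : ∀ t : ℝ, Real.sin (s * t) ^ 2 + Real.cos (s * t) ^ 2 = 1 := fun t =>
    Real.sin_sq_add_cos_sq (s * t)
  refine ⟨?_, ?_, ?_, ?_⟩
  · intro t
    apply normone
    have : γ t = Real.cos (s * t) • c₁ + Real.sin (s * t) • c₂ + (1 : ℝ) • c₄ := by
      rw [hγ']; module
    rw [this, hcombo]
    have := pyth t
    nlinarith
  · intro t
    apply normone
    have : deriv γ t = (-(s * Real.sin (s * t))) • c₁ + (s * Real.cos (s * t)) • c₂
        + (0 : ℝ) • c₄ := by
      rw [hd1]; module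
    rw [this, hcombo]
    have := pyth t
    nlinarith
  · intro t
    apply normone
    have : iteratedDeriv 2 γ t + γ t =
        (-Real.cos (s * t)) • c₁ + (-Real.sin (s * t)) • c₂ + (1 : ℝ) • c₄ := by
      rw [hit2, hd2, hγ']; module
    rw [this, hcombo]
    have := pyth t
    nlinarith
  · intro t
    rw [hit4, hd4, hit2, hd2, hγ']
    simp only
    module
end

section
/- Let n ≥ 3, let a, b > 0 be real numbers with a² + b² = 2 and a² ≠ b², and let c₁, c₂, c₃, c₄ ∈ ℝ^{n+1} be pairwise orthogonal vectors with ‖c₁‖² = ‖c₂‖² = ‖c₃‖² = ‖c₄‖² = 1/2. Define γ : ℝ → ℝ^{n+1} by γ(t) = cos(at)·c₁ + sin(at)·c₂ + cos(bt)·c₃ + sin(bt)·c₄. Then ‖γ(t)‖ = 1 and ‖γ′(t)‖ = 1 for all t (γ is an arc-length parametrized curve on the unit sphere Sⁿ), its geodesic curvature is constant with ‖γ″(t) + γ(t)‖² = 1 − a²b² ∈ (0,1) for all t, and γ satisfies the biharmonic equation γ⁗(t) + 2γ″(t) + (1 − k²)γ(t) = 0 for all t, where k² = 1 − a²b²; hence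 γ is a proper biharmonic curve of Sⁿ with first curvature k₁² = 1 − a²b² ∈ (0,1). -/
open Real
open scoped RealInnerProductSpace

lemma curve_deriv {E : Type*} [NormedAddCommGroup E] [NormedSpace ℝ E]
    (a b : ℝ) (u v u' v' : E) :
    deriv (fun t => Real.cos (a * t) • u + Real.sin (a * t) • v
        + Real.cos (b * t) • u' + Real.sin (b * t) • v')
    = fun t => Real.cos (a * t) • (a • v) + Real.sin (a * t) • (-(a • u))
        + Real.cos (b * t) • (b • v') + Real.sin (b * t) • (-(b • u')) := by
  funext t
  apply HasDerivAt.deriv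
  have hca : HasDerivAt (fun t => Real.cos (a * t)) (-Real.sin (a * t) * a) t :=
    (Real.hasDerivAt_cos (a * t)).comp t (by simpa using (hasDerivAt_id t).const_mul a)
  have hsa : HasDerivAt (fun t => Real.sin (a * t)) (Real.cos (a * t) * a) t :=
    (Real.hasDerivAt_sin (a * t)).comp t (by simpa using (hasDerivAt_id t).const_mul a)
  have hcb : HasDerivAt (fun t => Real.cos (b * t)) (-Real.sin (b * t) * b) t :=
    (Real.hasDerivAt_cos (b * t)).comp t (by simpa using (hasDerivAt_id t).const_mul b)
  have hsb : HasDerivAt (fun t => Real.sin (b * t)) (Real.cos (b * t) * b) t :=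
    (Real.hasDerivAt_sin (b * t)).comp t (by simpa using (hasDerivAt_id t).const_mul b)
  have := (((hca.smul_const u).add (hsa.smul_const v)).add (hcb.smul_const u')).add
    (hsb.smul_const v')
  convert this using 1
  case e'_8 => rfl
  module

lemma combo_norm_sq {E : Type*} [NormedAddCommGroup E] [InnerProductSpace ℝ E]
    (c₁ c₂ c₃ c₄ : E)
    (h12 : ⟪c₁, c₂⟫ = 0) (h13 : ⟪c₁, c₃⟫ = 0) (h14 : ⟪c₁, c₄⟫ = 0)
    (h23 : ⟪c₂, c₃⟫ = 0) (h24 : ⟪c₂, c₄⟫ = 0) (h34 : ⟪c₃, c₄⟫ = 0)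
    (hn1 : ‖c₁‖ ^ 2 = 1 / 2) (hn2 : ‖c₂‖ ^ 2 = 1 / 2)
    (hn3 : ‖c₃‖ ^ 2 = 1 / 2) (hn4 : ‖c₄‖ ^ 2 = 1 / 2)
    (x y z w : ℝ) :
    ‖x • c₁ + y • c₂ + z • c₃ + w • c₄‖ ^ 2
      = (x ^ 2 + y ^ 2 + z ^ 2 + w ^ 2) / 2 := by
  have e1 : ⟪c₁, c₁⟫ = 1 / 2 := by rw [real_inner_self_eq_norm_sq, hn1]
  have e2 : ⟪c₂, c₂⟫ = 1 / 2 := by rw [real_inner_self_eq_norm_sq, hn2]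
  have e3 : ⟪c₃, c₃⟫ = 1 / 2 := by rw [real_inner_self_eq_norm_sq, hn3]
  have e4 : ⟪c₄, c₄⟫ = 1 / 2 := by rw [real_inner_self_eq_norm_sq, hn4]
  have h21 : ⟪c₂, c₁⟫ = 0 := by rw [real_inner_comm]; exact h12
  have h31 : ⟪c₃, c₁⟫ = 0 := by rw [real_inner_comm]; exact h13
  have h41 : ⟪c₄, c₁⟫ = 0 := by rw [real_inner_comm]; exact h14
  have h32 : ⟪c₃, c₂⟫ = 0 := by rw [real_inner_comm]; exact h23
  have h42 : ⟪c₄, c₂⟫ = 0 := by rw [real_inner_comm]; exact h24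
  have h43 : ⟪c₄, c₃⟫ = 0 := by rw [real_inner_comm]; exact h34
  rw [← real_inner_self_eq_norm_sq]
  simp only [inner_add_left, inner_add_right, real_inner_smul_left, real_inner_smul_right,
    h12, h13, h14, h23, h24, h34, h21, h31, h41, h32, h42, h43, e1, e2, e3, e4]
  ring

set_option maxHeartbeats 1600000 in
/-- The curves `γ(t) = cos(at)·c₁ + sin(at)·c₂ + cos(bt)·c₃ + sin(bt)·c₄`, with
`a² + b² = 2`, `a² ≠ b²` and `c₁, c₂, c₃, c₄` pairwise orthogonal of squared norm
`1/2`, are proper biharmonic curves of `Sⁿ` with `k₁² = 1 − a²b² ∈ (0,1)`. -/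
theorem clifford_torus_geodesic_is_proper_biharmonic
    (n : ℕ) (hn : 3 ≤ n) (a b : ℝ) (ha : 0 < a) (hb : 0 < b)
    (hab : a ^ 2 + b ^ 2 = 2) (hne : a ^ 2 ≠ b ^ 2)
    (c₁ c₂ c₃ c₄ : EuclideanSpace ℝ (Fin (n + 1)))
    (h12 : ⟪c₁, c₂⟫ = 0) (h13 : ⟪c₁, c₃⟫ = 0) (h14 : ⟪c₁, c₄⟫ = 0)
    (h23 : ⟪c₂, c₃⟫ = 0) (h24 : ⟪c₂, c₄⟫ = 0) (h34 : ⟪c₃, c₄⟫ = 0)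
    (hn1 : ‖c₁‖ ^ 2 = 1 / 2) (hn2 : ‖c₂‖ ^ 2 = 1 / 2)
    (hn3 : ‖c₃‖ ^ 2 = 1 / 2) (hn4 : ‖c₄‖ ^ 2 = 1 / 2)
    (γ : ℝ → EuclideanSpace ℝ (Fin (n + 1)))
    (hγ : ∀ t, γ t = Real.cos (a * t) • c₁ + Real.sin (a * t) • c₂
        + Real.cos (b * t) • c₃ + Real.sin (b * t) • c₄) :
    (∀ t, ‖γ t‖ = 1) ∧ (∀ t, ‖deriv γ t‖ = 1) ∧
      (0 < 1 - a ^ 2 * b ^ 2 ∧ 1 - a ^ 2 * b ^ 2 < 1) ∧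
      (∀ t, ‖iteratedDeriv 2 γ t + γ t‖ ^ 2 = 1 - a ^ 2 * b ^ 2) ∧
      (∀ t, iteratedDeriv 4 γ t + (2 : ℝ) • iteratedDeriv 2 γ t
          + (1 - (1 - a ^ 2 * b ^ 2)) • γ t = 0) := by
  have hγ' : γ = fun t => Real.cos (a * t) • c₁ + Real.sin (a * t) • c₂
      + Real.cos (b * t) • c₃ + Real.sin (b * t) • c₄ := funext hγ
  have combo := combo_norm_sq c₁ c₂ c₃ c₄ h12 h13 h14 h23 h24 h34 hn1 hn2 hn3 hn4
  have norm_of_sq : ∀ (v : EuclideanSpace ℝ (Fin (n + 1))), ‖v‖ ^ 2 = 1 → ‖v‖ = 1 := by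
    intro v hv
    have h0 : (‖v‖ - 1) * (‖v‖ + 1) = 0 := by nlinarith
    rcases mul_eq_zero.mp h0 with h | h
    · linarith
    · have := norm_nonneg v; linarith
  -- derivatives
  have d1 : deriv γ = fun t => Real.cos (a * t) • (a • c₂) + Real.sin (a * t) • (-(a • c₁))
      + Real.cos (b * t) • (b • c₄) + Real.sin (b * t) • (-(b • c₃)) := by
    rw [hγ', curve_deriv]
  have d2 : iteratedDeriv 2 γ = fun t =>
      Real.cos (a * t) • (a • -(a • c₁)) + Real.sin (a * t) • (-(a • a • c₂))
      + Real.cos (b * t) • (b • -(b • c₃)) + Real.sin (b * t) • (-(b • b • c₄)) := by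
    rw [iteratedDeriv_succ, iteratedDeriv_one, d1, curve_deriv]
  have d3 : deriv (iteratedDeriv 2 γ) = fun t =>
      Real.cos (a * t) • (a • -(a • a • c₂)) + Real.sin (a * t) • (-(a • a • -(a • c₁)))
      + Real.cos (b * t) • (b • -(b • b • c₄)) + Real.sin (b * t) • (-(b • b • -(b • c₃))) := by
    rw [d2, curve_deriv]
  have d4 : iteratedDeriv 4 γ = fun t =>
      Real.cos (a * t) • (a • -(a • a • -(a • c₁)))
      + Real.sin (a * t) • (-(a • a • -(a • a • c₂)))
      + Real.cos (b * t) • (b • -(b • b • -(b • c₃)))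
      + Real.sin (b * t) • (-(b • b • -(b • b • c₄))) := by
    rw [show (4 : ℕ) = 3 + 1 from rfl, iteratedDeriv_succ,
      show (3 : ℕ) = 2 + 1 from rfl, iteratedDeriv_succ, d3, curve_deriv]
  refine ⟨?_, ?_, ⟨?_, ?_⟩, ?_, ?_⟩
  · intro t
    apply norm_of_sq
    rw [hγ t, combo]
    have h1 := Real.sin_sq_add_cos_sq (a * t)
    have h2 := Real.sin_sq_add_cos_sq (b * t)
    linear_combination h1 / 2 + h2 / 2
  · intro t
    apply norm_of_sq
    have hrw : deriv γ t = (-(a * Real.sin (a * t))) • c₁ + (a * Real.cos (a * t)) • c₂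
        + (-(b * Real.sin (b * t))) • c₃ + (b * Real.cos (b * t)) • c₄ := by
      rw [d1]; module
    rw [hrw, combo]
    have h1 := Real.sin_sq_add_cos_sq (a * t)
    have h2 := Real.sin_sq_add_cos_sq (b * t)
    linear_combination (a ^ 2 / 2) * h1 + (b ^ 2 / 2) * h2 + hab / 2
  · have hd : a ^ 2 - b ^ 2 ≠ 0 := sub_ne_zero.mpr hne
    nlinarith [sq_pos_of_ne_zero hd]
  · nlinarith [mul_pos ha hb]
  · intro t
    have hrw : iteratedDeriv 2 γ t + γ t
        = ((1 - a ^ 2) * Real.cos (a * t)) • c₁ + ((1 - a ^ 2) * Real.sin (a * t)) • c₂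
        + ((1 - b ^ 2) * Real.cos (b * t)) • c₃ + ((1 - b ^ 2) * Real.sin (b * t)) • c₄ := by
      rw [d2, hγ t]; module
    rw [hrw, combo]
    have h1 := Real.sin_sq_add_cos_sq (a * t)
    have h2 := Real.sin_sq_add_cos_sq (b * t)
    linear_combination ((1 - a ^ 2) ^ 2 / 2) * h1 + ((1 - b ^ 2) ^ 2 / 2) * h2
      + ((a ^ 2 + b ^ 2) / 2) * hab
  · intro t
    rw [d4, d2, hγ t]
    match_scalars
    · linear_combination (a ^ 2 * Real.cos (a * t)) * hab
    · linear_combination (a ^ 2 * Real.sin (a * t)) * hab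
    · linear_combination (b ^ 2 * Real.cos (b * t)) * hab
    · linear_combination (b ^ 2 * Real.sin (b * t)) * hab
end

section
/- Let I ⊆ ℝ be a nonempty open interval and let γ : I → ℝⁿ be a smooth curve parametrized by arc length (‖γ′(t)‖ = 1 for all t ∈ I) whose fourth derivative vanishes identically (γ⁗(t) = 0 for all t ∈ I). Then γ is an open part of a straight line: there exist p, v ∈ ℝⁿ with ‖v‖ = 1 such that γ(t) = p + t·v for all t ∈ I. -/
open RealInnerProductSpace

/-- A function with zero derivative at every point of an open convex set is constant there. -/
private lemma aux_const_of_deriv_zero {E : Type*} [NormedAddCommGroup E] [NormedSpace ℝ E]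
    {f : ℝ → E} {s : Set ℝ} (hconv : Convex ℝ s) (hop : IsOpen s)
    (hd : ∀ t ∈ s, HasDerivAt f 0 t) {x y : ℝ} (hx : x ∈ s) (hy : y ∈ s) : f x = f y := by
  refine hconv.is_const_of_fderivWithin_eq_zero
    (fun t ht => ((hd t ht).differentiableAt).differentiableWithinAt) (fun t ht => ?_) hx hy
  rw [fderivWithin_of_isOpen hop ht, (hd t ht).hasFDerivAt.fderiv]
  exact ContinuousLinearMap.ext fun x => by simp

/-- A function equal to a constant on an open set has derivative 0 at its points. -/
private lemma aux_hasDerivAt_zero_of_const {E : Type*} [NormedAddCommGroup E] [NormedSpace ℝ E]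
    {f : ℝ → E} {s : Set ℝ} (hop : IsOpen s) {c : E} (hf : ∀ t ∈ s, f t = c)
    {x : ℝ} (hx : x ∈ s) : HasDerivAt f 0 x := by
  apply (hasDerivAt_const x c).congr_of_eventuallyEq
  filter_upwards [hop.mem_nhds hx] with t ht using hf t ht

/-- Every biharmonic curve of `ℝⁿ` (i.e. an arc-length parametrized curve with
vanishing fourth derivative) is an open part of a straight line. -/
theorem biharmonic_curve_in_euclidean_space_is_line
    (n : ℕ) (I : Set ℝ) (hI : IsOpen I) (hne : I.Nonempty) (hconn : I.OrdConnected)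
    (γ : ℝ → EuclideanSpace ℝ (Fin n)) (hγ : ContDiffOn ℝ (⊤ : ℕ∞) γ I)
    (harc : ∀ t ∈ I, ‖deriv γ t‖ = 1)
    (hbih : ∀ t ∈ I, iteratedDeriv 4 γ t = 0) :
    ∃ p v : EuclideanSpace ℝ (Fin n), ‖v‖ = 1 ∧ ∀ t ∈ I, γ t = p + t • v := by
  obtain ⟨t0, ht0⟩ := hne
  have hconv : Convex ℝ I := convex_iff_ordConnected.2 hconn
  set g := deriv γ with hg
  set h2 := deriv g with hh2
  set h3 := deriv h2 with hh3
  -- smoothness of the iterated derivatives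
  have hC1 : ContDiffOn ℝ (⊤ : ℕ∞) g I := hγ.deriv_of_isOpen hI (by simp)
  have hC2 : ContDiffOn ℝ (⊤ : ℕ∞) h2 I := hC1.deriv_of_isOpen hI (by simp)
  have hC3 : ContDiffOn ℝ (⊤ : ℕ∞) h3 I := hC2.deriv_of_isOpen hI (by simp)
  have hdA : ∀ (f : ℝ → EuclideanSpace ℝ (Fin n)), ContDiffOn ℝ (⊤ : ℕ∞) f I →
      ∀ t ∈ I, HasDerivAt f (deriv f t) t := by
    intro f hf t ht
    exact ((hf.contDiffAt (hI.mem_nhds ht)).differentiableAt (by simp)).hasDerivAt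
  have hγd : ∀ t ∈ I, HasDerivAt γ (g t) t := hdA γ hγ
  have hgd : ∀ t ∈ I, HasDerivAt g (h2 t) t := hdA g hC1
  have hhd : ∀ t ∈ I, HasDerivAt h2 (h3 t) t := hdA h2 hC2
  have hkd : ∀ t ∈ I, HasDerivAt h3 0 t := by
    intro t ht
    have h4 : iteratedDeriv 4 γ = deriv h3 := by
      rw [iteratedDeriv_eq_iterate]; rfl
    have := (hdA h3 hC3 t ht)
    rwa [← h4, hbih t ht] at this
  -- arc length: ⟪g, g⟫ = 1 on I
  have harc' : ∀ t ∈ I, ⟪g t, g t⟫ = 1 := by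
    intro t ht
    rw [real_inner_self_eq_norm_sq, harc t ht, one_pow]
  -- first differentiation: ⟪h2, g⟫ = 0 on I
  have step1 : ∀ t ∈ I, ⟪h2 t, g t⟫ = 0 := by
    intro t ht
    have hd1 : HasDerivAt (fun t => ⟪g t, g t⟫) (⟪g t, h2 t⟫ + ⟪h2 t, g t⟫) t :=
      (hgd t ht).inner ℝ (hgd t ht)
    have hd0 : HasDerivAt (fun t => ⟪g t, g t⟫) 0 t :=
      aux_hasDerivAt_zero_of_const hI harc' ht
    have := hd1.unique hd0
    have comm := real_inner_comm (g t) (h2 t)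
    linarith
  -- second differentiation: ⟪h2, h2⟫ + ⟪h3, g⟫ = 0 on I
  have step2 : ∀ t ∈ I, ⟪h2 t, h2 t⟫ + ⟪h3 t, g t⟫ = 0 := by
    intro t ht
    have hd1 : HasDerivAt (fun t => ⟪h2 t, g t⟫) (⟪h2 t, h2 t⟫ + ⟪h3 t, g t⟫) t :=
      (hhd t ht).inner ℝ (hgd t ht)
    have hd0 : HasDerivAt (fun t => ⟪h2 t, g t⟫) 0 t :=
      aux_hasDerivAt_zero_of_const hI step1 ht
    exact hd1.unique hd0
  -- third differentiation: ⟪h3, h2⟫ = 0 on I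
  have step3 : ∀ t ∈ I, ⟪h3 t, h2 t⟫ = 0 := by
    intro t ht
    have hd1 : HasDerivAt (fun t => ⟪h2 t, h2 t⟫ + ⟪h3 t, g t⟫)
        ((⟪h2 t, h3 t⟫ + ⟪h3 t, h2 t⟫) + (⟪h3 t, h2 t⟫ + ⟪(0 : EuclideanSpace ℝ (Fin n)), g t⟫)) t :=
      ((hhd t ht).inner ℝ (hhd t ht)).add ((hkd t ht).inner ℝ (hgd t ht))
    have hd0 : HasDerivAt (fun t => ⟪h2 t, h2 t⟫ + ⟪h3 t, g t⟫) 0 t :=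
      aux_hasDerivAt_zero_of_const hI step2 ht
    have := hd1.unique hd0
    rw [inner_zero_left] at this
    have comm := real_inner_comm (h2 t) (h3 t)
    linarith
  -- h3 is constant on I
  set c := h3 t0 with hc
  have hh3const : ∀ t ∈ I, h3 t = c := fun t ht =>
    aux_const_of_deriv_zero hconv hI hkd ht ht0
  -- h2 is affine: h2 t = h2 t0 + (t - t0) • c
  have hh2aff : ∀ t ∈ I, h2 t = h2 t0 + (t - t0) • c := by
    intro t ht
    have hd : ∀ s ∈ I, HasDerivAt (fun u => h2 u - u • c) 0 s := by
      intro s hs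
      have := (hhd s hs).sub ((hasDerivAt_id s).smul_const c)
      rw [hh3const s hs, one_smul, sub_self] at this; exact this
    have := aux_const_of_deriv_zero hconv hI hd ht ht0
    have : h2 t = h2 t0 - t0 • c + t • c := by
      rw [← this]; abel
    rw [this, sub_smul]; abel
  -- find a second point in I to conclude c = 0
  obtain ⟨ε, hε, hball⟩ := Metric.isOpen_iff.1 hI t0 ht0
  have ht1 : t0 + ε / 2 ∈ I := by
    apply hball
    rw [Metric.mem_ball, Real.dist_eq, show t0 + ε / 2 - t0 = ε / 2 by ring,
      abs_of_pos (by linarith)]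
    linarith
  have hc0 : c = 0 := by
    have e0 : ⟪c, h2 t0⟫ = 0 := by
      have := step3 t0 ht0
      rwa [hh3const t0 ht0] at this
    have e1 : ⟪c, h2 t0⟫ + (ε / 2) * ⟪c, c⟫ = 0 := by
      have := step3 (t0 + ε / 2) ht1
      rw [hh3const _ ht1, hh2aff _ ht1, inner_add_right, real_inner_smul_right] at this
      simpa using this
    have : ⟪c, c⟫ = 0 := by
      have hmul : (ε / 2) * ⟪c, c⟫ = 0 := by linarith
      rcases mul_eq_zero.1 hmul with h | h
      · exact absurd h (by positivity)
      · exact h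
    exact inner_self_eq_zero.1 this
  -- hence h2 = 0 on I
  have hh2zero : ∀ t ∈ I, h2 t = 0 := by
    intro t ht
    have := step2 t ht
    rw [hh3const t ht, hc0, inner_zero_left, add_zero] at this
    exact inner_self_eq_zero.1 this
  -- g is constant on I, with norm 1
  set v := g t0 with hv
  have hgconst : ∀ t ∈ I, g t = v := by
    intro t ht
    exact aux_const_of_deriv_zero hconv hI
      (fun s hs => by simpa [hh2zero s hs] using hgd s hs) ht ht0
  -- γ t - t • v is constant on I
  have hlin : ∀ t ∈ I, γ t - t • v = γ t0 - t0 • v := by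
    intro t ht
    have hd : ∀ s ∈ I, HasDerivAt (fun u => γ u - u • v) 0 s := by
      intro s hs
      have := (hγd s hs).sub ((hasDerivAt_id s).smul_const v)
      rw [hgconst s hs, one_smul, sub_self] at this; exact this
    exact aux_const_of_deriv_zero hconv hI hd ht ht0
  refine ⟨γ t0 - t0 • v, v, harc t0 ht0, fun t ht => ?_⟩
  have := hlin t ht
  rw [← this]; abel
end

section
/- Let m ≥ 1 be an integer, let ℓ ∈ ℝ with ℓ ≠ 0 and ℓ ≠ 1, and let φ : ℝᵐ \ {0} → ℝᵐ \ {0} be the axially symmetric map φ(y) = y/‖y‖^ℓ. Then φ is harmonic (i.e. each component function y ↦ yᵢ/‖y‖^ℓ satisfies Δf = 0 on ℝᵐ \ {0}) if and only if m = ℓ. -/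
/-- The Euclidean Laplacian `Δf = Σᵢ ∂²f/∂xᵢ²` of a function on `ℝᵐ`. -/
noncomputable def laplacian {m : ℕ} (f : EuclideanSpace ℝ (Fin m) → ℝ)
    (x : EuclideanSpace ℝ (Fin m)) : ℝ :=
  ∑ i : Fin m, fderiv ℝ (fun y => fderiv ℝ f y (EuclideanSpace.single i 1)) x
      (EuclideanSpace.single i 1)

open RealInnerProductSpace

variable {m : ℕ}

local notation "E" => EuclideanSpace ℝ (Fin m)

lemma hA (x : E) : HasFDerivAt (fun y : E => (⟪y, y⟫ : ℝ)) ((2:ℝ) • (innerSL ℝ x)) x := by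
  have h := (hasFDerivAt_id x).inner ℝ (hasFDerivAt_id x)
  refine h.congr_fderiv ?_
  ext h'
  simp [fderivInnerCLM_apply, real_inner_comm, two_smul]

lemma hB (p : ℝ) {x : E} (hx : x ≠ 0) :
    HasFDerivAt (fun y : E => (⟪y, y⟫ : ℝ) ^ p)
      ((2 * p * (⟪x, x⟫ : ℝ) ^ (p - 1)) • innerSL ℝ x) x := by
  have hne : (⟪x, x⟫ : ℝ) ≠ 0 := fun h => hx (inner_self_eq_zero.mp h)
  have h := HasDerivAt.comp_hasFDerivAt (f := fun y : E => (⟪y, y⟫ : ℝ))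
    x (Real.hasDerivAt_rpow_const (p := p) (Or.inl hne)) (hA x)
  refine h.congr_fderiv ?_
  ext h'
  simp only [ContinuousLinearMap.smul_apply, smul_eq_mul]
  ring

lemma hC (p : ℝ) (j : Fin m) {x : E} (hx : x ≠ 0) :
    HasFDerivAt (fun y : E => y j * (⟪y, y⟫ : ℝ) ^ p)
      (x j • ((2 * p * (⟪x, x⟫ : ℝ) ^ (p - 1)) • innerSL ℝ x)
        + ((⟪x, x⟫ : ℝ) ^ p) • (EuclideanSpace.proj j : E →L[ℝ] ℝ)) x := by
  have h1 : HasFDerivAt (fun y : E => y j) (EuclideanSpace.proj j : E →L[ℝ] ℝ) x :=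
    (EuclideanSpace.proj j : E →L[ℝ] ℝ).hasFDerivAt
  exact h1.mul (hB p hx)

lemma fderiv_val (p : ℝ) (i j : Fin m) {x : E} (hx : x ≠ 0) :
    fderiv ℝ (fun y : E => y j * (⟪y, y⟫ : ℝ) ^ p) x (EuclideanSpace.single i 1)
      = x j * (2 * p * (⟪x, x⟫ : ℝ) ^ (p - 1)) * x i
        + (⟪x, x⟫ : ℝ) ^ p * (EuclideanSpace.single i 1 j) := by
  rw [(hC p j hx).fderiv]
  simp [EuclideanSpace.inner_single_right, mul_comm, mul_assoc, mul_left_comm]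

lemma hG_val (p : ℝ) (i j : Fin m) {x : E} (hx : x ≠ 0) :
    fderiv ℝ (fun y : E => y j * (2 * p * (⟪y, y⟫ : ℝ) ^ (p - 1)) * y i
        + (⟪y, y⟫ : ℝ) ^ p * (EuclideanSpace.single i 1 j)) x (EuclideanSpace.single i 1)
      = 2 * p * (⟪x, x⟫ : ℝ) ^ (p - 1) * x j
        + 4 * p * (p - 1) * (⟪x, x⟫ : ℝ) ^ (p - 2) * x i ^ 2 * x j
        + 4 * p * (⟪x, x⟫ : ℝ) ^ (p - 1) * x i * (EuclideanSpace.single i 1 j) := by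
  have h1j : HasFDerivAt (fun y : E => y j) (EuclideanSpace.proj j : E →L[ℝ] ℝ) x :=
    (EuclideanSpace.proj j : E →L[ℝ] ℝ).hasFDerivAt
  have h1i : HasFDerivAt (fun y : E => y i) (EuclideanSpace.proj i : E →L[ℝ] ℝ) x :=
    (EuclideanSpace.proj i : E →L[ℝ] ℝ).hasFDerivAt
  have h2 := (hB (m := m) (p - 1) hx).const_mul (2 * p)
  have h3 := ((h1j.mul h2).mul h1i).add ((hB (m := m) p hx).mul_const (EuclideanSpace.single i 1 j))
  rw [HasFDerivAt.fderiv (f := fun y : E => y j * (2 * p * (⟪y, y⟫ : ℝ) ^ (p - 1)) * y i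
      + (⟪y, y⟫ : ℝ) ^ p * (EuclideanSpace.single i 1 j)) h3]
  have hs : (⟪x, EuclideanSpace.single i 1⟫ : ℝ) = x i := by
    simp [EuclideanSpace.inner_single_right]
  simp only [ContinuousLinearMap.add_apply, ContinuousLinearMap.smul_apply, innerSL_apply_apply,
    hs, Pi.mul_apply, smul_eq_mul, PiLp.proj_apply, EuclideanSpace.single_apply, if_pos rfl]
  rw [show p - 1 - 1 = p - 2 by ring]
  by_cases h : j = i <;> simp only [h, if_true, if_false, if_pos rfl] <;> ring

lemma laplacian_eq (p : ℝ) (j : Fin m) {x : E} (hx : x ≠ 0) :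
    laplacian (fun y : E => y j * (⟪y, y⟫ : ℝ) ^ p) x
      = 2 * p * ((m : ℝ) + 2 * p) * (⟪x, x⟫ : ℝ) ^ (p - 1) * x j := by
  have hpos : (0:ℝ) < ⟪x, x⟫ := by
    rw [real_inner_self_eq_norm_sq]
    exact pow_pos (norm_pos_iff.mpr hx) 2
  have hterm : ∀ i : Fin m,
      fderiv ℝ (fun y => fderiv ℝ (fun y : E => y j * (⟪y, y⟫ : ℝ) ^ p) y
          (EuclideanSpace.single i 1)) x (EuclideanSpace.single i 1)
        = 2 * p * (⟪x, x⟫ : ℝ) ^ (p - 1) * x j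
          + 4 * p * (p - 1) * (⟪x, x⟫ : ℝ) ^ (p - 2) * x i ^ 2 * x j
          + 4 * p * (⟪x, x⟫ : ℝ) ^ (p - 1) * x i * (EuclideanSpace.single i 1 j) := by
    intro i
    have hev : (fun y => fderiv ℝ (fun y : E => y j * (⟪y, y⟫ : ℝ) ^ p) y
          (EuclideanSpace.single i 1))
        =ᶠ[nhds x] (fun y : E => y j * (2 * p * (⟪y, y⟫ : ℝ) ^ (p - 1)) * y i
          + (⟪y, y⟫ : ℝ) ^ p * (EuclideanSpace.single i 1 j)) := by
      filter_upwards [IsOpen.mem_nhds isOpen_compl_singleton hx] with y hy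
      exact fderiv_val p i j hy
    rw [hev.fderiv_eq, hG_val p i j hx]
  rw [laplacian]
  simp only [hterm]
  rw [Finset.sum_add_distrib, Finset.sum_add_distrib]
  have h1 : ∑ _i : Fin m, 2 * p * (⟪x, x⟫ : ℝ) ^ (p - 1) * x j
      = (m : ℝ) * (2 * p * (⟪x, x⟫ : ℝ) ^ (p - 1) * x j) := by
    simp [Finset.sum_const, nsmul_eq_mul]
  have hn : (⟪x, x⟫ : ℝ) = ∑ i : Fin m, x i ^ 2 := by
    simp only [PiLp.inner_apply, RCLike.inner_apply, conj_trivial, sq]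
  have h2 : ∑ i : Fin m, 4 * p * (p - 1) * (⟪x, x⟫ : ℝ) ^ (p - 2) * x i ^ 2 * x j
      = 4 * p * (p - 1) * (⟪x, x⟫ : ℝ) ^ (p - 2) * (⟪x, x⟫ : ℝ) * x j := by
    have : ∑ i : Fin m, 4 * p * (p - 1) * (⟪x, x⟫ : ℝ) ^ (p - 2) * x i ^ 2 * x j
        = (∑ i : Fin m, x i ^ 2) * (4 * p * (p - 1) * (⟪x, x⟫ : ℝ) ^ (p - 2) * x j) := by
      rw [Finset.sum_mul]
      exact Finset.sum_congr rfl fun i _ => by ring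
    rw [this, ← hn]; ring
  have h3 : ∑ i : Fin m, 4 * p * (⟪x, x⟫ : ℝ) ^ (p - 1) * x i * (EuclideanSpace.single i 1 j : ℝ)
      = 4 * p * (⟪x, x⟫ : ℝ) ^ (p - 1) * x j := by
    have : ∀ i : Fin m, 4 * p * (⟪x, x⟫ : ℝ) ^ (p - 1) * x i * (EuclideanSpace.single i 1 j : ℝ)
        = if j = i then 4 * p * (⟪x, x⟫ : ℝ) ^ (p - 1) * x i else 0 := by
      intro i
      rw [EuclideanSpace.single_apply]
      by_cases h : j = i <;> simp [h]
    simp only [this, Finset.sum_ite_eq, Finset.mem_univ, if_true]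
  rw [h1, h2, h3]
  have hmerge : (⟪x, x⟫ : ℝ) ^ (p - 2) * (⟪x, x⟫ : ℝ) = (⟪x, x⟫ : ℝ) ^ (p - 1) := by
    have h := Real.rpow_add hpos (p - 2) 1
    rw [Real.rpow_one] at h
    rw [← h, show p - 2 + 1 = p - 1 by ring]
  rw [show 4 * p * (p - 1) * (⟪x, x⟫ : ℝ) ^ (p - 2) * (⟪x, x⟫ : ℝ) * x j
      = 4 * p * (p - 1) * ((⟪x, x⟫ : ℝ) ^ (p - 2) * (⟪x, x⟫ : ℝ)) * x j by ring, hmerge]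
  ring


lemma func_eq (ℓ : ℝ) (hℓ0 : ℓ ≠ 0) (j : Fin m) :
    (fun y : E => y j / ‖y‖ ^ ℓ) = fun y : E => y j * (⟪y, y⟫ : ℝ) ^ (-(ℓ / 2)) := by
  funext y
  by_cases hy : y = 0
  · subst hy
    simp
  · have hns : (⟪y, y⟫ : ℝ) = ‖y‖ ^ (2 : ℕ) := real_inner_self_eq_norm_sq y
    rw [hns, ← Real.rpow_natCast ‖y‖ 2, ← Real.rpow_mul (norm_nonneg y)]
    rw [show ((2 : ℕ) : ℝ) * -(ℓ / 2) = -ℓ by push_cast; ring,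
      Real.rpow_neg (norm_nonneg y), div_eq_mul_inv]

/-- The axially symmetric map `φ(y) = y/‖y‖^ℓ` of `ℝᵐ \ {0}`, `ℓ ≠ 0, 1`, is
harmonic if and only if `m = ℓ`. -/
theorem axially_symmetric_power_map_harmonic_iff
    (m : ℕ) (hm : 1 ≤ m) (ℓ : ℝ) (hℓ0 : ℓ ≠ 0) (hℓ1 : ℓ ≠ 1) :
    (∀ i : Fin m, ∀ x : EuclideanSpace ℝ (Fin m), x ≠ 0 →
        laplacian (fun y => y i / ‖y‖ ^ ℓ) x = 0) ↔ (m : ℝ) = ℓ := by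
  constructor
  · intro h
    set j : Fin m := ⟨0, hm⟩
    set x : EuclideanSpace ℝ (Fin m) := EuclideanSpace.single j 1 with hxdef
    have hxj : x j = 1 := by
      rw [hxdef, EuclideanSpace.single_apply, if_pos rfl]
    have hx : x ≠ 0 := by
      intro h0
      rw [h0] at hxj
      simp at hxj
    have hval := h j x hx
    rw [func_eq ℓ hℓ0 j, laplacian_eq (-(ℓ / 2)) j hx] at hval
    have hin : (⟪x, x⟫ : ℝ) = 1 := by
      rw [hxdef, EuclideanSpace.inner_single_right]
      simp [EuclideanSpace.single_apply]
    rw [hin, hxj, Real.one_rpow] at hval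
    have h2 : ℓ * ((m : ℝ) - ℓ) = 0 := by nlinarith [hval]
    rcases mul_eq_zero.mp h2 with h3 | h3
    · exact absurd h3 hℓ0
    · linarith
  · intro h i x hx
    rw [func_eq ℓ hℓ0 i, laplacian_eq (-(ℓ / 2)) i hx]
    have : (m : ℝ) + 2 * -(ℓ / 2) = 0 := by rw [h]; ring
    rw [show (2 : ℝ) * -(ℓ / 2) * ((m : ℝ) + 2 * -(ℓ / 2)) = -ℓ * ((m : ℝ) + 2 * -(ℓ / 2)) by ring,
      this, mul_zero, zero_mul, zero_mul]
end

section
/- Let m ≥ 1 be an integer, let ℓ ∈ ℝ with ℓ ∉ {0, 1, −2}, and let φ : ℝᵐ \ {0} → ℝᵐ \ {0} be the axially symmetric map φ(y) = y/‖y‖^ℓ. Then φ is proper biharmonic (i.e. each component function y ↦ yᵢ/‖y‖^ℓ satisfies Δ(Δf) = 0 on ℝᵐ \ {0}, but φ is not harmonic) if and only if m = ℓ + 2. -/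
open scoped RealInnerProductSpace
open Filter


variable {m : ℕ}

lemma hasFDerivAt_coord (i : Fin m) (x : EuclideanSpace ℝ (Fin m)) :
    HasFDerivAt (fun y : EuclideanSpace ℝ (Fin m) => y i)
      (EuclideanSpace.proj i : EuclideanSpace ℝ (Fin m) →L[ℝ] ℝ) x :=
  (EuclideanSpace.proj i : EuclideanSpace ℝ (Fin m) →L[ℝ] ℝ).hasFDerivAt

lemma norm_sq_ne_zero {x : EuclideanSpace ℝ (Fin m)} (hx : x ≠ 0) : (‖x‖ ^ 2 : ℝ) ≠ 0 := by
  exact pow_ne_zero _ (norm_ne_zero_iff.mpr hx)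

lemma hasFDerivAt_r2q (q : ℝ) {x : EuclideanSpace ℝ (Fin m)} (hx : x ≠ 0) :
    HasFDerivAt (fun y : EuclideanSpace ℝ (Fin m) => ((‖y‖ ^ 2 : ℝ) ^ q))
      ((q * (‖x‖ ^ 2 : ℝ) ^ (q - 1)) • (2 • innerSL ℝ x)) x :=
  (hasStrictFDerivAt_norm_sq x).hasFDerivAt.rpow_const (Or.inl (norm_sq_ne_zero hx))

lemma inner_single (x : EuclideanSpace ℝ (Fin m)) (j : Fin m) :
    ⟪x, EuclideanSpace.single j (1:ℝ)⟫ = x j := by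
  rw [EuclideanSpace.inner_single_right]; simp

lemma proj_single (i j : Fin m) :
    (EuclideanSpace.proj i : EuclideanSpace ℝ (Fin m) →L[ℝ] ℝ)
      (EuclideanSpace.single j (1:ℝ)) = if j = i then 1 else 0 := by
  show (EuclideanSpace.single j (1:ℝ)) i = _
  rw [EuclideanSpace.single_apply]
  simp [eq_comm]

lemma fderiv_F_apply (c q : ℝ) (i j : Fin m) {x : EuclideanSpace ℝ (Fin m)} (hx : x ≠ 0) :
    fderiv ℝ (fun y : EuclideanSpace ℝ (Fin m) => c * y i * (‖y‖ ^ 2 : ℝ) ^ q) x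
      (EuclideanSpace.single j 1)
    = (if i = j then c else 0) * (‖x‖ ^ 2 : ℝ) ^ q
      + (2 * q * c) * (x i * x j) * (‖x‖ ^ 2 : ℝ) ^ (q - 1) := by
  have h := (((hasFDerivAt_const c x).mul (hasFDerivAt_coord i x)).mul
    (hasFDerivAt_r2q q hx)).fderiv
  simp only [Pi.mul_def, Pi.add_def] at h
  rw [h]
  rcases eq_or_ne i j with rfl | hij
  · simp only [ContinuousLinearMap.add_apply, ContinuousLinearMap.smul_apply, smul_eq_mul,
      ContinuousLinearMap.zero_apply, innerSL_apply_apply, inner_single, mul_zero, add_zero,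
      proj_single, if_pos rfl, if_true]
    ring
  · simp only [ContinuousLinearMap.add_apply, ContinuousLinearMap.smul_apply, smul_eq_mul,
      ContinuousLinearMap.zero_apply, innerSL_apply_apply, inner_single, mul_zero, add_zero,
      proj_single, if_neg (Ne.symm hij), if_neg hij]
    ring

example : True := trivial

lemma lap_congr {f g : EuclideanSpace ℝ (Fin m) → ℝ} {x : EuclideanSpace ℝ (Fin m)}
    {U : Set (EuclideanSpace ℝ (Fin m))} (hU : IsOpen U) (hx : x ∈ U)
    (h : ∀ y ∈ U, f y = g y) : laplacian f x = laplacian g x := by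
  unfold laplacian
  refine Finset.sum_congr rfl fun j _ => ?_
  have h2 : (fun y => fderiv ℝ f y (EuclideanSpace.single j 1))
      =ᶠ[nhds x] (fun y => fderiv ℝ g y (EuclideanSpace.single j 1)) := by
    filter_upwards [hU.mem_nhds hx] with y hy
    rw [Filter.EventuallyEq.fderiv_eq (Filter.eventually_of_mem (hU.mem_nhds hy) h)]
  rw [h2.fderiv_eq]

lemma fderiv_G_apply (c q : ℝ) (i j : Fin m) {x : EuclideanSpace ℝ (Fin m)} (hx : x ≠ 0) :
    fderiv ℝ (fun y : EuclideanSpace ℝ (Fin m) =>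
        (if i = j then c else 0) * (‖y‖ ^ 2 : ℝ) ^ q
          + (2 * q * c) * (y i * y j) * (‖y‖ ^ 2 : ℝ) ^ (q - 1)) x
      (EuclideanSpace.single j 1)
    = (if i = j then c else 0) * (2 * q * x j * (‖x‖ ^ 2 : ℝ) ^ (q - 1))
      + (2 * q * c) * ((x i + (if i = j then x j else 0)) * (‖x‖ ^ 2 : ℝ) ^ (q - 1)
          + (x i * x j) * (2 * (q - 1) * x j * (‖x‖ ^ 2 : ℝ) ^ (q - 1 - 1))) := by
  have h1 : HasFDerivAt (fun y : EuclideanSpace ℝ (Fin m) =>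
      (if i = j then c else 0) * (‖y‖ ^ 2 : ℝ) ^ q)
      ((if i = j then c else 0) • ((q * (‖x‖ ^ 2 : ℝ) ^ (q - 1)) • (2 • innerSL ℝ x))) x :=
    (hasFDerivAt_r2q q hx).const_mul _
  have h2 := ((hasFDerivAt_const (2 * q * c) x).mul
      ((hasFDerivAt_coord i x).mul (hasFDerivAt_coord j x))).mul (hasFDerivAt_r2q (q - 1) hx)
  have h := (h1.add h2).fderiv
  simp only [Pi.mul_def, Pi.add_def] at h
  rw [h]
  simp only [ContinuousLinearMap.add_apply, ContinuousLinearMap.smul_apply, smul_eq_mul,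
    ContinuousLinearMap.zero_apply, innerSL_apply_apply, inner_single, mul_zero, add_zero,
    zero_mul, zero_add, proj_single]
  rcases eq_or_ne i j with rfl | hij
  all_goals simp only [if_true, eq_self_iff_true, if_pos rfl, nsmul_eq_mul, Nat.cast_ofNat]
  · ring
  · simp only [if_neg hij, if_neg (Ne.symm hij)]
    ring

lemma sum_sq_eq (x : EuclideanSpace ℝ (Fin m)) : ∑ j, (x j) ^ 2 = ‖x‖ ^ 2 := by
  rw [EuclideanSpace.norm_eq,
    Real.sq_sqrt (Finset.sum_nonneg fun i _ => sq_nonneg ‖x i‖)]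
  simp [Real.norm_eq_abs, sq_abs]

lemma lap_F (c q : ℝ) (i : Fin m) {x : EuclideanSpace ℝ (Fin m)} (hx : x ≠ 0) :
    laplacian (fun y : EuclideanSpace ℝ (Fin m) => c * y i * (‖y‖ ^ 2 : ℝ) ^ q) x
      = (2 * q * ((m : ℝ) + 2 * q) * c) * x i * (‖x‖ ^ 2 : ℝ) ^ (q - 1) := by
  have hr2 : (0:ℝ) < ‖x‖ ^ 2 := pow_pos (norm_pos_iff.mpr hx) 2
  have key : ∀ j : Fin m,
      fderiv ℝ (fun y => fderiv ℝ
          (fun z : EuclideanSpace ℝ (Fin m) => c * z i * (‖z‖ ^ 2 : ℝ) ^ q) y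
          (EuclideanSpace.single j 1)) x (EuclideanSpace.single j 1)
      = (if i = j then 4 * q * c * x i * (‖x‖ ^ 2 : ℝ) ^ (q - 1) else 0)
        + 2 * q * c * x i * (‖x‖ ^ 2 : ℝ) ^ (q - 1)
        + 4 * q * (q - 1) * c * x i * (‖x‖ ^ 2 : ℝ) ^ (q - 1 - 1) * (x j) ^ 2 := by
    intro j
    have hev : (fun y => fderiv ℝ
        (fun z : EuclideanSpace ℝ (Fin m) => c * z i * (‖z‖ ^ 2 : ℝ) ^ q) y
        (EuclideanSpace.single j 1))
        =ᶠ[nhds x] (fun y : EuclideanSpace ℝ (Fin m) =>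
          (if i = j then c else 0) * (‖y‖ ^ 2 : ℝ) ^ q
            + (2 * q * c) * (y i * y j) * (‖y‖ ^ 2 : ℝ) ^ (q - 1)) := by
      filter_upwards [isOpen_compl_singleton.mem_nhds hx] with y hy
      exact fderiv_F_apply c q i j hy
    rw [hev.fderiv_eq, fderiv_G_apply c q i j hx]
    rcases eq_or_ne i j with rfl | hij
    · simp only [eq_self_iff_true, if_true, if_pos rfl]; ring
    · simp only [if_neg hij]; ring
  unfold laplacian
  rw [Finset.sum_congr rfl fun j _ => key j]
  have hpow : (‖x‖ ^ 2 : ℝ) ^ (q - 1 - 1) * (‖x‖ ^ 2 : ℝ) = (‖x‖ ^ 2 : ℝ) ^ (q - 1) := by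
    nth_rewrite 2 [← Real.rpow_one (‖x‖ ^ 2 : ℝ)]
    rw [← Real.rpow_add hr2]; ring_nf
  rw [Finset.sum_add_distrib, Finset.sum_add_distrib, Finset.sum_ite_eq, Finset.sum_const,
    ← Finset.mul_sum, sum_sq_eq]
  simp only [Finset.mem_univ, if_true, Finset.card_univ, Fintype.card_fin, nsmul_eq_mul]
  linear_combination (4 * q * (q - 1) * c * x i) * hpow

lemma lap_lap_F (c q : ℝ) (i : Fin m) {x : EuclideanSpace ℝ (Fin m)} (hx : x ≠ 0) :
    laplacian (laplacian
        (fun y : EuclideanSpace ℝ (Fin m) => c * y i * (‖y‖ ^ 2 : ℝ) ^ q)) x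
      = (2 * (q - 1) * ((m : ℝ) + 2 * (q - 1)) * (2 * q * ((m : ℝ) + 2 * q) * c)) * x i
          * (‖x‖ ^ 2 : ℝ) ^ (q - 1 - 1) := by
  have h := lap_congr
    (f := laplacian (fun y : EuclideanSpace ℝ (Fin m) => c * y i * (‖y‖ ^ 2 : ℝ) ^ q))
    (g := fun y : EuclideanSpace ℝ (Fin m) =>
      (2 * q * ((m : ℝ) + 2 * q) * c) * y i * (‖y‖ ^ 2 : ℝ) ^ (q - 1))
    (U := {(0 : EuclideanSpace ℝ (Fin m))}ᶜ) isOpen_compl_singleton hx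
    (fun y hy => lap_F c q i hy)
  rw [h, lap_F _ _ _ hx]

/-- The axially symmetric map `φ(y) = y/‖y‖^ℓ` of `ℝᵐ \ {0}`, `ℓ ∉ {0, 1, −2}`,
is proper biharmonic (biharmonic but not harmonic) if and only if `m = ℓ + 2`. -/
theorem axially_symmetric_power_map_proper_biharmonic_iff
    (m : ℕ) (hm : 1 ≤ m) (ℓ : ℝ) (hℓ0 : ℓ ≠ 0) (hℓ1 : ℓ ≠ 1) (hℓ2 : ℓ ≠ -2) :
    ((∀ i : Fin m, ∀ x : EuclideanSpace ℝ (Fin m), x ≠ 0 →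
        laplacian (laplacian (fun y => y i / ‖y‖ ^ ℓ)) x = 0) ∧
      ¬ (∀ i : Fin m, ∀ x : EuclideanSpace ℝ (Fin m), x ≠ 0 →
        laplacian (fun y => y i / ‖y‖ ^ ℓ) x = 0)) ↔ (m : ℝ) = ℓ + 2 := by
  set q : ℝ := -(ℓ / 2) with hq
  have hfun : ∀ i : Fin m, (fun y : EuclideanSpace ℝ (Fin m) => y i / ‖y‖ ^ ℓ)
      = fun y : EuclideanSpace ℝ (Fin m) => (1:ℝ) * y i * (‖y‖ ^ 2 : ℝ) ^ q := by
    intro i; funext y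
    rcases eq_or_ne y 0 with rfl | hy
    · simp [Real.zero_rpow hℓ0]
    · have hny : (0:ℝ) < ‖y‖ := norm_pos_iff.mpr hy
      have h2 : (‖y‖ ^ 2 : ℝ) = ‖y‖ ^ ((2:ℕ) : ℝ) := (Real.rpow_natCast _ 2).symm
      rw [one_mul, div_eq_mul_inv, ← Real.rpow_neg hny.le, h2, ← Real.rpow_mul hny.le]
      have h3 : ((2:ℕ):ℝ) * q = -ℓ := by rw [hq]; push_cast; ring
      rw [h3]
  simp only [hfun]
  set i0 : Fin m := ⟨0, hm⟩ with hi0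
  have hx0i : (EuclideanSpace.single i0 (1:ℝ)) i0 = 1 := by
    simp [EuclideanSpace.single_apply]
  have hx0 : (EuclideanSpace.single i0 (1:ℝ)) ≠ 0 := by
    intro h
    rw [h] at hx0i
    simpa using hx0i
  have hnx0 : ‖EuclideanSpace.single i0 (1:ℝ)‖ = 1 := by simp
  constructor
  · rintro ⟨hbi, hnh⟩
    have h0 := hbi i0 (EuclideanSpace.single i0 1) hx0
    rw [lap_lap_F 1 q i0 hx0, hx0i, hnx0] at h0
    simp only [one_pow, Real.one_rpow, mul_one] at h0
    have hprod : (ℓ + 2) * ((m:ℝ) - ℓ - 2) * ℓ * ((m:ℝ) - ℓ) = 0 := by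
      rw [hq] at h0
      linear_combination h0
    rcases mul_eq_zero.mp hprod with h | h
    · rcases mul_eq_zero.mp h with h' | h'
      · rcases mul_eq_zero.mp h' with h'' | h''
        · exact absurd (by linarith : ℓ = -2) hℓ2
        · linarith
      · exact absurd h' hℓ0
    · exfalso
      apply hnh
      intro i x hx
      rw [lap_F 1 q i hx]
      have hz : (m:ℝ) + 2 * q = 0 := by rw [hq]; linarith
      rw [hz]
      ring
  · intro hme
    constructor
    · intro i x hx
      rw [lap_lap_F 1 q i hx]
      have hz : (m:ℝ) + 2 * (q - 1) = 0 := by rw [hq]; linarith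
      rw [hz]
      ring
    · intro hh
      have h0 := hh i0 (EuclideanSpace.single i0 1) hx0
      rw [lap_F 1 q i0 hx0, hx0i, hnx0] at h0
      simp only [one_pow, Real.one_rpow, mul_one] at h0
      rw [hq, hme] at h0
      exact hℓ0 (by linear_combination -h0 / 2)
end

section
/- Let a > r > 0 and define f : ℝ → ℝ by f(u) = a + r·cos(u/r). Then the set of solutions u₀ ∈ [0, 2πr) of the equation f′(u₀)² + f″(u₀)·f(u₀) = 0 consists of exactly the two values u₁ = r·arccos((−a + √(a² + 8r²))/(4r)) and u₂ = 2πr − r·arccos((−a + √(a² + 8r²))/(4r)). -/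
open Real

/-- The biharmonic parallels of the torus of revolution with radii `a > r > 0`:
the solutions in `[0, 2πr)` of `f′(u₀)² + f″(u₀)·f(u₀) = 0` for the profile
`f(u) = a + r·cos(u/r)` are exactly `u₁ = r·arccos((−a + √(a²+8r²))/(4r))` and
`u₂ = 2πr − u₁`. -/
theorem biharmonic_parallels_of_torus
    (a r : ℝ) (hr : 0 < r) (har : r < a)
    (f : ℝ → ℝ) (hf : ∀ u, f u = a + r * Real.cos (u / r)) :
    {u₀ : ℝ | u₀ ∈ Set.Ico 0 (2 * π * r) ∧
        (deriv f u₀) ^ 2 + deriv (deriv f) u₀ * f u₀ = 0} =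
      {r * Real.arccos ((-a + Real.sqrt (a ^ 2 + 8 * r ^ 2)) / (4 * r)),
        2 * π * r - r * Real.arccos ((-a + Real.sqrt (a ^ 2 + 8 * r ^ 2)) / (4 * r))} := by
  have hr0 : r ≠ 0 := ne_of_gt hr
  have ha : 0 < a := hr.trans har
  set s := Real.sqrt (a ^ 2 + 8 * r ^ 2) with hs
  have hs2 : s ^ 2 = a ^ 2 + 8 * r ^ 2 := Real.sq_sqrt (by positivity)
  have hsnn : 0 ≤ s := Real.sqrt_nonneg _
  have hspos : 0 < s := Real.sqrt_pos.mpr (by positivity)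
  set c := (-a + s) / (4 * r) with hc
  have hc1 : c < 1 := by
    rw [hc, div_lt_one (by linarith : (0:ℝ) < 4 * r)]
    have h2 : s ^ 2 < (a + 4 * r) ^ 2 := by nlinarith [hs2]
    have := lt_of_pow_lt_pow_left₀ 2 (by positivity : (0:ℝ) ≤ a + 4 * r) h2
    linarith
  have hsa : a < s := by
    have h2 : a ^ 2 < s ^ 2 := by nlinarith [hs2]
    exact lt_of_pow_lt_pow_left₀ 2 hsnn h2
  have hc0 : 0 < c := div_pos (by linarith) (by linarith)
  have hcm1 : -1 ≤ c := by linarith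
  have hcl1 : c ≤ 1 := le_of_lt hc1
  have hcquad : 2 * r * c ^ 2 + a * c - r = 0 := by
    rw [hc]; field_simp; nlinarith [hs2]
  -- derivative computations
  have hfe : f = fun u => a + r * Real.cos (u / r) := funext hf
  have hd1 : deriv f = fun u => -Real.sin (u / r) := by
    funext u
    rw [hfe]
    have h1 : HasDerivAt (fun x : ℝ => x / r) (1 / r) u := (hasDerivAt_id u).div_const r
    have h2 := ((h1.cos).const_mul r).const_add a
    rw [h2.deriv]
    field_simp
  have hd2 : ∀ u, deriv (deriv f) u = -(Real.cos (u / r) / r) := by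
    intro u
    rw [hd1]
    have h1 : HasDerivAt (fun x : ℝ => x / r) (1 / r) u := (hasDerivAt_id u).div_const r
    have h2 : HasDerivAt (fun x => -Real.sin (x / r)) (-(Real.cos (u / r) * (1 / r))) u := (h1.sin).neg
    rw [h2.deriv]
    field_simp
  have key : ∀ u : ℝ, deriv f u ^ 2 + deriv (deriv f) u * f u =
      (-Real.sin (u / r)) ^ 2 + -(Real.cos (u / r) / r) * (a + r * Real.cos (u / r)) := by
    intro u
    rw [hd2 u, hf u]
    simp only [hd1]
  have hquad : ∀ θ : ℝ, ((-Real.sin θ) ^ 2 + -(Real.cos θ / r) * (a + r * Real.cos θ) = 0)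
      ↔ Real.cos θ = c := by
    intro θ
    have hpy := Real.sin_sq_add_cos_sq θ
    constructor
    · intro h
      have hq : 2 * r * (Real.cos θ) ^ 2 + a * Real.cos θ - r = 0 := by
        field_simp at h
        nlinarith [hpy, h]
      have hsq : (4 * r * Real.cos θ + a) ^ 2 = s ^ 2 := by
        linear_combination 8 * r * hq - hs2
      have hge : -1 ≤ Real.cos θ := Real.neg_one_le_cos θ
      have hslb : 4 * r - a < s := by
        have h2 : (4 * r - a) ^ 2 < s ^ 2 := by nlinarith [hs2]
        rcases le_or_gt (4 * r - a) 0 with h3 | h3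
        · linarith
        · exact lt_of_pow_lt_pow_left₀ 2 hsnn h2
      have hx1 : 0 ≤ 4 * r * (Real.cos θ + 1) :=
        mul_nonneg (by linarith) (by linarith)
      have hxpos : 0 < 4 * r * Real.cos θ + a + s := by nlinarith [hx1]
      have hfac : (4 * r * Real.cos θ + a - s) * (4 * r * Real.cos θ + a + s) = 0 := by
        linear_combination hsq
      have hxs : 4 * r * Real.cos θ + a = s := by
        rcases mul_eq_zero.mp hfac with h' | h'
        · linarith
        · linarith
      rw [hc]; field_simp; linarith [hxs]
    · intro h
      have hsin : Real.sin θ ^ 2 = 1 - c ^ 2 := by rw [← h]; linarith [hpy, sq_nonneg (Real.cos θ)] 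
      rw [neg_sq, hsin, h]
      field_simp
      linarith [hcquad]
  have hπ := Real.pi_pos
  have harc0 : 0 ≤ Real.arccos c := Real.arccos_nonneg c
  have harcpi : Real.arccos c ≤ π := Real.arccos_le_pi c
  have harcpos : 0 < Real.arccos c := Real.arccos_pos.mpr hc1
  have hcosarc : Real.cos (Real.arccos c) = c := Real.cos_arccos hcm1 hcl1
  ext u
  simp only [Set.mem_setOf_eq, Set.mem_Ico, Set.mem_insert_iff, Set.mem_singleton_iff]
  rw [key u, hquad (u / r)]
  constructor
  · rintro ⟨⟨hu0, hu2⟩, hcos⟩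
    have hθ0 : 0 ≤ u / r := div_nonneg hu0 hr.le
    have hθ2 : u / r < 2 * π := by
      rw [div_lt_iff₀ hr]; linarith
    by_cases hle : u / r ≤ π
    · left
      have : Real.arccos c = u / r := by rw [← hcos]; exact Real.arccos_cos hθ0 hle
      rw [this]; field_simp
    · right
      push_neg at hle
      have hφ : Real.arccos c = 2 * π - u / r := by
        rw [← hcos, ← Real.cos_two_pi_sub]
        exact Real.arccos_cos (by linarith) (by linarith)
      rw [hφ]; field_simp; ring
  · rintro (h | h)
    · subst h
      refine ⟨⟨by positivity, ?_⟩, ?_⟩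
      · linarith [mul_le_mul_of_nonneg_left harcpi hr.le, mul_pos hπ hr]
      · rw [mul_div_cancel_left₀ _ hr0, hcosarc]
    · subst h
      refine ⟨⟨by linarith [mul_le_mul_of_nonneg_left harcpi hr.le, mul_pos hπ hr],
          by linarith [mul_pos hr harcpos]⟩, ?_⟩
      have heq : (2 * π * r - r * Real.arccos c) / r = 2 * π - Real.arccos c := by
        field_simp
      rw [heq, Real.cos_two_pi_sub, hcosarc]
end

section
/- The function f : ℝ → ℝ defined by f(r) = ln(r² + 1) is non-constant and satisfies the third-order ordinary differential equation f‴(r) + 3f″(r)f′(r) + (f′(r))³ = 0 for all r ∈ ℝ. -/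
private lemma hne (r : ℝ) : r ^ 2 + 1 ≠ 0 := by positivity

private lemma hsq (r : ℝ) : HasDerivAt (fun r : ℝ => r ^ 2 + 1) (2 * r) r := by
  simpa using ((hasDerivAt_pow 2 r).add_const 1)

private lemma hd1 (r : ℝ) :
    HasDerivAt (fun r : ℝ => Real.log (r ^ 2 + 1)) (2 * r / (r ^ 2 + 1)) r := by
  have := (Real.hasDerivAt_log (hne r)).comp r (hsq r)
  simpa [div_eq_inv_mul, Function.comp_def] using this

private lemma hd2 (r : ℝ) :
    HasDerivAt (fun r : ℝ => 2 * r / (r ^ 2 + 1))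
      ((2 - 2 * r ^ 2) / (r ^ 2 + 1) ^ 2) r := by
  have hc : HasDerivAt (fun r : ℝ => 2 * r) 2 r := by
    simpa using (hasDerivAt_id r).const_mul 2
  have := hc.div (hsq r) (hne r)
  refine this.congr_deriv ?_
  field_simp
  ring

private lemma hd3 (r : ℝ) :
    HasDerivAt (fun r : ℝ => (2 - 2 * r ^ 2) / (r ^ 2 + 1) ^ 2)
      ((4 * r ^ 3 - 12 * r) / (r ^ 2 + 1) ^ 3) r := by
  have hc : HasDerivAt (fun r : ℝ => 2 - 2 * r ^ 2) (-(4 * r)) r := by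
    have := ((hasDerivAt_pow 2 r).const_mul 2).const_sub 2
    refine this.congr_deriv ?_
    ring
  have hdd : HasDerivAt (fun r : ℝ => (r ^ 2 + 1) ^ 2)
      (2 * (r ^ 2 + 1) ^ 1 * (2 * r)) r := (hsq r).pow 2
  have hne2 : (r ^ 2 + 1) ^ 2 ≠ 0 := pow_ne_zero _ (hne r)
  have := hc.div hdd hne2
  refine this.congr_deriv ?_
  field_simp
  ring

/-- The function `f(r) = ln(r² + 1)` is non-constant and solves the ODE
`f‴ + 3f″f′ + (f′)³ = 0`; hence (ℝ², (r²+1)²(dx²+dy²)) — the Enneper minimal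
surface metric — turns every line through the origin into a proper biharmonic
curve. -/
theorem log_sq_add_one_solves_biharmonic_conformal_ode
    (f : ℝ → ℝ) (hf : ∀ r, f r = Real.log (r ^ 2 + 1)) :
    (¬ ∃ c : ℝ, ∀ r, f r = c) ∧
      ∀ r : ℝ, iteratedDeriv 3 f r + 3 * iteratedDeriv 2 f r * deriv f r
          + (deriv f r) ^ 3 = 0 := by
  have hfe : f = fun r : ℝ => Real.log (r ^ 2 + 1) := funext hf
  subst hfe
  constructor
  · rintro ⟨c, hc⟩
    have h0 := hc 0
    have h1 := hc 1
    simp at h0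
    rw [← h0] at h1
    have : (0:ℝ) < Real.log ((1:ℝ) ^ 2 + 1) := by
      apply Real.log_pos; norm_num
    linarith [h1, this]
  · intro r
    have e1 : deriv (fun r : ℝ => Real.log (r ^ 2 + 1))
        = fun r => 2 * r / (r ^ 2 + 1) := funext fun r => (hd1 r).deriv
    have e2 : deriv (fun r : ℝ => 2 * r / (r ^ 2 + 1))
        = fun r => (2 - 2 * r ^ 2) / (r ^ 2 + 1) ^ 2 := funext fun r => (hd2 r).deriv
    have e3 : deriv (fun r : ℝ => (2 - 2 * r ^ 2) / (r ^ 2 + 1) ^ 2)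
        = fun r => (4 * r ^ 3 - 12 * r) / (r ^ 2 + 1) ^ 3 :=
      funext fun r => (hd3 r).deriv
    simp only [iteratedDeriv_succ, iteratedDeriv_zero, e1, e2, e3]
    have := hne r
    field_simp
    ring
end

section
/- Define x₀ : ℝ² → ℝ⁶ by x₀(u,v) = (1/√2)·(cos u, sin u·sin(√2 v), −sin u·cos(√2 v), sin u, cos u·sin(√2 v), −cos u·cos(√2 v)), and let J be the standard complex structure of ℝ⁶ ≅ ℂ³ given by J(x¹,x²,x³,x⁴,x⁵,x⁶) = (−x⁴,−x⁵,−x⁶,x¹,x²,x³). Then for all (u,v) ∈ ℝ²: (i) ‖x₀(u,v)‖ = 1, so x₀ maps into the unit sphere S⁵ ⊂ ℝ⁶; (ii) ⟨∂x₀/∂u, ∂x₀/∂u⟩ = 1, ⟨∂x₀/∂v, ∂x₀/∂v⟩ = 1 and ⟨∂x₀/∂u, ∂x₀/∂v⟩ = 0, so x₀ is a Riemannian immersion of the flat plane (the induced metric is du² + dv²); (iii) ⟨∂x₀/∂u, J x₀⟩ = 0 and ⟨∂x₀/∂v, J x₀⟩ = 0, so x₀ is a Legendre immersion with respect to the standard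 contact form η_p(X) = ⟨X, Jp⟩ of S⁵. -/
open Real WithLp
open scoped RealInnerProductSpace

theorem HasDerivAt.toLp {𝕜 ι : Type*} {E : ι → Type*} [NontriviallyNormedField 𝕜] [Fintype ι]
    [∀ i, NormedAddCommGroup (E i)] [∀ i, NormedSpace 𝕜 (E i)] (p : ENNReal) [Fact (1 ≤ p)]
    {f : 𝕜 → ∀ i, E i} {f' : ∀ i, E i} {t : 𝕜} (h : HasDerivAt f f' t) :
    HasDerivAt (fun s => toLp p (f s)) (toLp p f') t :=
  (PiLp.hasFDerivAt_toLp p (f t)).comp_hasDerivAt t h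

theorem EuclideanSpace.inner_toLp_vecCons_six (a₀ a₁ a₂ a₃ a₄ a₅ b₀ b₁ b₂ b₃ b₄ b₅ : ℝ) :
    ⟪toLp 2 ![a₀, a₁, a₂, a₃, a₄, a₅], toLp 2 ![b₀, b₁, b₂, b₃, b₄, b₅]⟫ =
      a₀ * b₀ + a₁ * b₁ + a₂ * b₂ + a₃ * b₃ + a₄ * b₄ + a₅ * b₅ := by
  simp only [EuclideanSpace.inner_toLp_toLp, dotProduct, Fin.sum_univ_six, Matrix.cons_val,
    star_trivial]
  ring

open EuclideanSpace

/-- Multiplication by `i` on `ℂ³`, in the real coordinates `zₖ = xₖ + i xₖ₊₃`. -/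
def stdComplexStructure (x : EuclideanSpace ℝ (Fin 6)) : EuclideanSpace ℝ (Fin 6) :=
  toLp 2 ![-(x 3), -(x 4), -(x 5), x 0, x 1, x 2]

theorem stdComplexStructure_toLp_vecCons (a₀ a₁ a₂ a₃ a₄ a₅ : ℝ) :
    stdComplexStructure (toLp 2 ![a₀, a₁, a₂, a₃, a₄, a₅]) =
      toLp 2 ![-a₃, -a₄, -a₅, a₀, a₁, a₂] :=
  rfl

noncomputable section

def sasahara (u v : ℝ) : EuclideanSpace ℝ (Fin 6) :=
  toLp 2 ![(1 / √2) * cos u,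
    (1 / √2) * (sin u * sin (√2 * v)),
    (1 / √2) * (-(sin u * cos (√2 * v))),
    (1 / √2) * sin u,
    (1 / √2) * (cos u * sin (√2 * v)),
    (1 / √2) * (-(cos u * cos (√2 * v)))]

def sasaharaDerivFst (u v : ℝ) : EuclideanSpace ℝ (Fin 6) :=
  toLp 2 ![(1 / √2) * -sin u,
    (1 / √2) * (cos u * sin (√2 * v)),
    (1 / √2) * (-(cos u * cos (√2 * v))),
    (1 / √2) * cos u,
    (1 / √2) * (-(sin u * sin (√2 * v))),
    (1 / √2) * (sin u * cos (√2 * v))]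

/-- The chain-rule factor `√2` cancels the normalisation `1 / √2`. -/
def sasaharaDerivSnd (u v : ℝ) : EuclideanSpace ℝ (Fin 6) :=
  toLp 2 ![0, sin u * cos (√2 * v), sin u * sin (√2 * v),
    0, cos u * cos (√2 * v), cos u * sin (√2 * v)]

end

theorem hasDerivAt_sasahara_fst (u v : ℝ) :
    HasDerivAt (sasahara · v) (sasaharaDerivFst u v) u := by
  refine HasDerivAt.toLp 2 (hasDerivAt_pi.2 fun i => ?_)
  fin_cases i <;> simp only [Fin.reduceFinMk, Matrix.cons_val] <;>
    refine (DifferentiableAt.hasDerivAt (by fun_prop)).congr_deriv ?_ <;> simp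

theorem hasDerivAt_sasahara_snd (u v : ℝ) :
    HasDerivAt (sasahara u ·) (sasaharaDerivSnd u v) v := by
  refine HasDerivAt.toLp 2 (hasDerivAt_pi.2 fun i => ?_)
  fin_cases i <;> simp only [Fin.reduceFinMk, Matrix.cons_val] <;>
    refine (DifferentiableAt.hasDerivAt (by fun_prop)).congr_deriv ?_ <;>
    simp (disch := fun_prop) [_root_.deriv_sin, _root_.deriv_cos] <;> field_simp

theorem norm_sasahara (u v : ℝ) : ‖sasahara u v‖ = 1 := by
  have h : ⟪sasahara u v, sasahara u v⟫ = 1 := by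
    rw [sasahara, inner_toLp_vecCons_six]
    grind [sin_sq_add_cos_sq]
  rw [norm_eq_sqrt_real_inner, h, sqrt_one]

theorem inner_sasaharaDerivFst_self (u v : ℝ) :
    ⟪sasaharaDerivFst u v, sasaharaDerivFst u v⟫ = 1 := by
  rw [sasaharaDerivFst, inner_toLp_vecCons_six]
  grind [sin_sq_add_cos_sq]

theorem inner_sasaharaDerivSnd_self (u v : ℝ) :
    ⟪sasaharaDerivSnd u v, sasaharaDerivSnd u v⟫ = 1 := by
  rw [sasaharaDerivSnd, inner_toLp_vecCons_six]
  grind [sin_sq_add_cos_sq]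

theorem inner_sasaharaDerivFst_sasaharaDerivSnd (u v : ℝ) :
    ⟪sasaharaDerivFst u v, sasaharaDerivSnd u v⟫ = 0 := by
  rw [sasaharaDerivFst, sasaharaDerivSnd, inner_toLp_vecCons_six]
  ring

theorem inner_sasaharaDerivFst_stdComplexStructure (u v : ℝ) :
    ⟪sasaharaDerivFst u v, stdComplexStructure (sasahara u v)⟫ = 0 := by
  rw [sasaharaDerivFst, sasahara, stdComplexStructure_toLp_vecCons, inner_toLp_vecCons_six]
  grind [sin_sq_add_cos_sq]

theorem inner_sasaharaDerivSnd_stdComplexStructure (u v : ℝ) :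
    ⟪sasaharaDerivSnd u v, stdComplexStructure (sasahara u v)⟫ = 0 := by
  rw [sasaharaDerivSnd, sasahara, stdComplexStructure_toLp_vecCons, inner_toLp_vecCons_six]
  ring

/-- Sasahara's explicit proper biharmonic Legendre immersion of a flat plane
into `S⁵ ⊂ ℝ⁶ ≅ ℂ³`: the map `x₀` takes values in the unit sphere, is a
Riemannian immersion of the flat plane (induced metric `du² + dv²`), and is
Legendre with respect to the standard contact form `η_p(X) = ⟨X, Jp⟩`. -/
theorem sasahara_immersion_spherical_isometric_legendre
    (x₀ : ℝ → ℝ → EuclideanSpace ℝ (Fin 6))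
    (hx₀ : ∀ u v, x₀ u v = (WithLp.equiv 2 (Fin 6 → ℝ)).symm
      ![(1 / Real.sqrt 2) * Real.cos u,
        (1 / Real.sqrt 2) * (Real.sin u * Real.sin (Real.sqrt 2 * v)),
        (1 / Real.sqrt 2) * (-(Real.sin u * Real.cos (Real.sqrt 2 * v))),
        (1 / Real.sqrt 2) * Real.sin u,
        (1 / Real.sqrt 2) * (Real.cos u * Real.sin (Real.sqrt 2 * v)),
        (1 / Real.sqrt 2) * (-(Real.cos u * Real.cos (Real.sqrt 2 * v)))])
    (J : EuclideanSpace ℝ (Fin 6) → EuclideanSpace ℝ (Fin 6))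
    (hJ : ∀ x : EuclideanSpace ℝ (Fin 6), J x = (WithLp.equiv 2 (Fin 6 → ℝ)).symm
      ![-(x 3), -(x 4), -(x 5), x 0, x 1, x 2]) :
    ∀ u v : ℝ,
      ‖x₀ u v‖ = 1 ∧
      ⟪deriv (fun s => x₀ s v) u, deriv (fun s => x₀ s v) u⟫ = 1 ∧
      ⟪deriv (fun s => x₀ u s) v, deriv (fun s => x₀ u s) v⟫ = 1 ∧
      ⟪deriv (fun s => x₀ s v) u, deriv (fun s => x₀ u s) v⟫ = 0 ∧
      ⟪deriv (fun s => x₀ s v) u, J (x₀ u v)⟫ = 0 ∧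
      ⟪deriv (fun s => x₀ u s) v, J (x₀ u v)⟫ = 0 := by
  obtain rfl : x₀ = sasahara := funext₂ hx₀
  obtain rfl : J = stdComplexStructure := funext hJ
  intro u v
  rw [(hasDerivAt_sasahara_fst u v).deriv, (hasDerivAt_sasahara_snd u v).deriv]
  exact ⟨norm_sasahara u v, inner_sasaharaDerivFst_self u v, inner_sasaharaDerivSnd_self u v,
    inner_sasaharaDerivFst_sasaharaDerivSnd u v, inner_sasaharaDerivFst_stdComplexStructure u v,
    inner_sasaharaDerivSnd_stdComplexStructure u v⟩
end
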